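/- arXiv:math-ph/0501022 — 10 statements merged into one kernel-verified Lean document; each statement's English description precedes it below -/
import Mathlib

section
/- Every bounded normal operator on a complex Hilbert space with an orthonormal basis of eigenvectors is complex symmetric: there exists a conjugation C such that T = C T* C. (Finite-dimensional version: every normal matrix T on ℂⁿ satisfies T = C T* C for some conjugation C.) -/
/-!
A normal operator `T` on a finite-dimensional complex inner product space has an orthonormal basis
`(bᵢ)` of eigenvectors, `T bᵢ = μᵢ bᵢ`; this comes from simultaneously diagonalizing the commuting
self-adjoint operators `ℜ T` and `ℑ T`. Then `T* bᵢ = conj μᵢ bᵢ`, and the conjugation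
`C (∑ cᵢ bᵢ) = ∑ conj cᵢ bᵢ` fixing the basis satisfies `C T* C bᵢ = C (conj μᵢ bᵢ) = μᵢ bᵢ = T bᵢ`.
-/

open scoped ComplexConjugate

local notation "⟪" x ", " y "⟫" => @inner ℂ _ _ x y

open Module Module.End
open scoped ComplexStarModule

namespace LinearMap.IsSymmetric

variable {𝕜 E : Type*} [RCLike 𝕜] [NormedAddCommGroup E] [InnerProductSpace 𝕜 E]
  [FiniteDimensional 𝕜 E]

theorem exists_orthonormalBasis_eigenvectors_of_commute {A B : E →ₗ[𝕜] E}
    (hA : A.IsSymmetric) (hB : B.IsSymmetric) (hAB : Commute A B) :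
    ∃ (b : OrthonormalBasis (Fin (finrank 𝕜 E)) 𝕜 E) (α β : Fin (finrank 𝕜 E) → 𝕜),
      ∀ i, A (b i) = α i • b i ∧ B (b i) = β i • b i := by
  classical
  let V : 𝕜 × 𝕜 → Submodule 𝕜 E := fun μ ↦ eigenspace A μ.2 ⊓ eigenspace B μ.1
  have hV : DirectSum.IsInternal V := hA.directSum_isInternal_of_commute hB hAB
  -- `𝕜 × 𝕜` is infinite, but only finitely many joint eigenspaces are nonzero
  let ι := {μ // V μ ≠ ⊥}
  have : Fintype ι := (WellFoundedGT.finite_ne_bot_of_iSupIndep hV.submodule_iSupIndep).fintype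
  have hVι : DirectSum.IsInternal fun μ : ι ↦ V μ := DirectSum.isInternal_ne_bot_iff.mpr hV
  have hOrth : OrthogonalFamily 𝕜 (fun μ : ι ↦ V μ) fun μ ↦ (V μ).subtypeₗᵢ :=
    (hA.orthogonalFamily_eigenspace_inf_eigenspace hB).comp Subtype.coe_injective
  let μ i := (hVι.subordinateOrthonormalBasisIndex rfl i hOrth).val
  refine ⟨hVι.subordinateOrthonormalBasis rfl hOrth, fun i ↦ (μ i).2, fun i ↦ (μ i).1, fun i ↦ ?_⟩
  have hmem := Submodule.mem_inf.mp (hVι.subordinateOrthonormalBasis_subordinate rfl i hOrth)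
  exact ⟨mem_eigenspace_iff.mp hmem.1, mem_eigenspace_iff.mp hmem.2⟩

end LinearMap.IsSymmetric

namespace ContinuousLinearMap

variable {E : Type*} [NormedAddCommGroup E] [InnerProductSpace ℂ E] [FiniteDimensional ℂ E]

theorem exists_orthonormalBasis_eigenvectors_of_isStarNormal (T : E →L[ℂ] E) [IsStarNormal T] :
    ∃ (b : OrthonormalBasis (Fin (finrank ℂ E)) ℂ E) (μ : Fin (finrank ℂ E) → ℂ),
      ∀ i, T (b i) = μ i • b i := by
  have hAB : Commute ((ℜ T : E →L[ℂ] E) : E →ₗ[ℂ] E) ((ℑ T : E →L[ℂ] E) : E →ₗ[ℂ] E) :=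
    LinearMap.ext fun x ↦ congr($(Commute.realPart_imaginaryPart T) x)
  obtain ⟨b, α, β, hb⟩ := (ℜ T).2.isSymmetric.exists_orthonormalBasis_eigenvectors_of_commute
    (ℑ T).2.isSymmetric hAB
  refine ⟨b, fun i ↦ α i + Complex.I * β i, fun i ↦ ?_⟩
  obtain ⟨hα, hβ⟩ := hb i
  calc T (b i) = (ℜ T : E →L[ℂ] E) (b i) + Complex.I • (ℑ T : E →L[ℂ] E) (b i) := by
        conv_lhs => rw [← realPart_add_I_smul_imaginaryPart T]
        rfl
    _ = (α i + Complex.I * β i) • b i := by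
        rw [← coe_coe, ← coe_coe, hα, hβ, add_smul, mul_smul]

end ContinuousLinearMap

namespace OrthonormalBasis

variable {ι E : Type*} [Fintype ι] [NormedAddCommGroup E] [InnerProductSpace ℂ E]
  (b : OrthonormalBasis ι ℂ E)

noncomputable def conjugation : E →ₗ⋆[ℂ] E where
  toFun f := ∑ i, conj ⟪b i, f⟫ • b i
  map_add' f g := by simp only [inner_add_right, map_add, add_smul, Finset.sum_add_distrib]
  map_smul' c f := by simp only [inner_smul_right, map_mul, mul_smul, Finset.smul_sum]

theorem conjugation_apply (f : E) : b.conjugation f = ∑ i, conj ⟪b i, f⟫ • b i := rfl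

theorem inner_conjugation (i : ι) (f : E) : ⟪b i, b.conjugation f⟫ = conj ⟪b i, f⟫ :=
  b.orthonormal.inner_right_fintype _ i

theorem conjugation_conjugation (f : E) : b.conjugation (b.conjugation f) = f := by
  simpa only [conjugation_apply (f := b.conjugation f), inner_conjugation, Complex.conj_conj]
    using b.sum_repr' f

theorem inner_conjugation_conjugation (f g : E) :
    ⟪b.conjugation f, b.conjugation g⟫ = ⟪g, f⟫ := by
  rw [← b.sum_inner_mul_inner, ← b.sum_inner_mul_inner]
  refine Finset.sum_congr rfl fun i _ ↦ ?_
  rw [← inner_conj_symm, inner_conjugation, inner_conjugation, Complex.conj_conj, inner_conj_symm,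
    mul_comm]

variable [CompleteSpace E] {T : E →L[ℂ] E} {μ : ι → ℂ}

theorem adjoint_apply_eq_conj_smul (hT : ∀ i, T (b i) = μ i • b i) (i : ι) :
    T.adjoint (b i) = conj (μ i) • b i := by
  classical
  refine InnerProductSpace.ext_inner_left_basis b.toBasis fun j ↦ ?_
  simp only [b.coe_toBasis, ContinuousLinearMap.adjoint_inner_right, hT, inner_smul_left,
    inner_smul_right, orthonormal_iff_ite.mp b.orthonormal]
  split_ifs with h <;> simp [h]

theorem apply_eq_conjugation_adjoint_conjugation (hT : ∀ i, T (b i) = μ i • b i) (f : E) :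
    T f = b.conjugation (T.adjoint (b.conjugation f)) := by
  refine InnerProductSpace.ext_inner_left_basis b.toBasis fun j ↦ ?_
  simp only [b.coe_toBasis]
  rw [← ContinuousLinearMap.adjoint_inner_left, b.adjoint_apply_eq_conj_smul hT, inner_conjugation,
    ContinuousLinearMap.adjoint_inner_right, hT, inner_smul_left, inner_smul_left, inner_conjugation]
  rw [map_mul, Complex.conj_conj, Complex.conj_conj]

end OrthonormalBasis

theorem normal_is_complex_symmetric (n : ℕ)
    (T : EuclideanSpace ℂ (Fin n) →L[ℂ] EuclideanSpace ℂ (Fin n))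
    (hnormal : T ∘L ContinuousLinearMap.adjoint T = ContinuousLinearMap.adjoint T ∘L T) :
    ∃ C : EuclideanSpace ℂ (Fin n) → EuclideanSpace ℂ (Fin n),
      (∀ f g, C (f + g) = C f + C g) ∧
      (∀ (c : ℂ) (f : EuclideanSpace ℂ (Fin n)), C (c • f) = conj c • C f) ∧
      (∀ f, C (C f) = f) ∧
      (∀ f g, ⟪C f, C g⟫ = ⟪g, f⟫) ∧
      (∀ f, T f = C (ContinuousLinearMap.adjoint T (C f))) := by
  have : IsStarNormal T := ⟨hnormal.symm⟩
  obtain ⟨b, μ, hb⟩ := T.exists_orthonormalBasis_eigenvectors_of_isStarNormal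
  exact ⟨b.conjugation, map_add _, map_smulₛₗ _, b.conjugation_conjugation,
    b.inner_conjugation_conjugation, b.apply_eq_conjugation_adjoint_conjugation hb⟩
end

section
/- If T is a bounded C-symmetric operator on a complex Hilbert space H, then there exists a conjugation J on H commuting with |T| = √(T*T) such that T = C J |T|. -/
open scoped ComplexConjugate

local notation "⟪" x ", " y "⟫" => @inner ℂ _ _ x y

lemma commute_cfc_of_commute {A : Type*} [CStarAlgebra A] {a b : A} (ha : IsSelfAdjoint a)
    (hab : Commute b a) (f : ℝ → ℝ) : Commute b (cfc f a) := by
  by_cases hf : ContinuousOn f (spectrum ℝ a)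
  · rw [cfc_apply f a ha hf]
    generalize (⟨_, hf.restrict⟩ : C(spectrum ℝ a, ℝ)) = g
    induction g using ContinuousMap.induction_on_of_compact with
    | const r =>
      have : (ContinuousMap.const (spectrum ℝ a) r) = algebraMap ℝ C(spectrum ℝ a, ℝ) r := rfl
      rw [this, AlgHomClass.commutes]
      exact (Algebra.commutes r b).symm
    | id => rwa [cfcHom_id ha]
    | star_id =>
      have : star (ContinuousMap.restrict (spectrum ℝ a) (ContinuousMap.id ℝ)) =
          ContinuousMap.restrict (spectrum ℝ a) (ContinuousMap.id ℝ) := by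
        ext x; exact star_trivial _
      rwa [this, cfcHom_id ha]
    | add f g hfc hgc => rw [map_add]; exact hfc.add_right hgc
    | mul f g hfc hgc => rw [map_mul]; exact hfc.mul_right hgc
    | frequently f hf' =>
      have hcl : IsClosed {g : C(spectrum ℝ a, ℝ) | Commute b (cfcHom ha g)} := by
        simp only [Commute, SemiconjBy]
        exact isClosed_eq (continuous_const.mul (cfcHom_isClosedEmbedding ha).continuous)
          ((cfcHom_isClosedEmbedding ha).continuous.mul continuous_const)
      exact hcl.closure_subset (mem_closure_iff_frequently.mpr hf')
  · rw [cfc_apply_of_not_continuousOn a hf]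
    exact Commute.zero_right b

lemma sqrt_of_sq {A : Type*} [CStarAlgebra A] [PartialOrder A] [StarOrderedRing A]
    {a : A} (ha : 0 ≤ a) : cfc Real.sqrt (a * a) = a := by
  have hsa : IsSelfAdjoint a := IsSelfAdjoint.of_nonneg ha
  have h1 : cfc (fun x : ℝ => x * x) a = a * a := by
    have := cfc_mul (fun x : ℝ => x) (fun x : ℝ => x) a (by fun_prop) (by fun_prop)
    rw [this, cfc_id' ℝ a]
  rw [← h1, ← cfc_comp Real.sqrt (fun x : ℝ => x * x) a hsa (by fun_prop) (by fun_prop)]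
  calc cfc (Real.sqrt ∘ fun x : ℝ => x * x) a = cfc (id : ℝ → ℝ) a := by
        apply cfc_congr
        intro x hx
        have hx0 : (0:ℝ) ≤ x := spectrum_nonneg_of_nonneg ha hx
        simp [Function.comp, Real.sqrt_mul_self hx0]
    _ = a := cfc_id ℝ a

lemma antilinear_isometry_inner {F : Type*} [NormedAddCommGroup F] [InnerProductSpace ℂ F]
    (J : F → F) (hadd : ∀ x y, J (x + y) = J x + J y)
    (hsmul : ∀ (c : ℂ) x, J (c • x) = conj c • J x)
    (hnorm : ∀ x, ‖J x‖ = ‖x‖) (x y : F) : ⟪J x, J y⟫ = ⟪y, x⟫ := by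
  have hneg : ∀ z, J (-z) = - J z := by
    intro z
    have := hsmul (-1) z
    simpa using this
  have hsub : ∀ z w, J (z - w) = J z - J w := by
    intro z w
    rw [sub_eq_add_neg, hadd, hneg, sub_eq_add_neg]
  have h1 : ‖J x + J y‖ = ‖x + y‖ := by rw [← hadd, hnorm]
  have h2 : ‖J x - J y‖ = ‖x - y‖ := by rw [← hsub, hnorm]
  have h3 : J x - Complex.I • J y = J (x + Complex.I • y) := by
    rw [hadd, hsmul]
    simp [Complex.conj_I, sub_eq_add_neg]
  have h4 : J x + Complex.I • J y = J (x - Complex.I • y) := by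
    rw [hsub, hsmul]
    simp [Complex.conj_I, sub_eq_add_neg]
  rw [← inner_conj_symm y x]
  rw [inner_eq_sum_norm_sq_div_four (𝕜 := ℂ) (J x) (J y),
    inner_eq_sum_norm_sq_div_four (𝕜 := ℂ) x y]
  simp only [RCLike.I_to_complex]
  rw [h1, h2, h3, h4, hnorm, hnorm]
  rw [map_div₀, map_add, map_sub, map_mul, map_sub]
  simp [Complex.conj_I, Complex.conj_ofReal]
  rw [show ((starRingEnd ℂ) 4) = 4 from map_ofNat _ 4]
  ring

open ContinuousLinearMap in
lemma intertwine {H : Type*} [NormedAddCommGroup H] [InnerProductSpace ℂ H] [CompleteSpace H]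
    (B Q T : H →L[ℂ] H) (hB : B.IsPositive) (hQ : Q.IsPositive)
    (hBsq : ∀ x, B (B x) = adjoint T (T x)) (hQsq : ∀ x, Q (Q x) = T (adjoint T x)) :
    ∀ f, T (B f) = Q (T f) := by
  classical
  set E := WithLp 2 (H × H)
  let e : E ≃L[ℂ] H × H := WithLp.prodContinuousLinearEquiv 2 ℂ H H
  let R : E →L[ℂ] E := e.symm.toContinuousLinearMap ∘L (Q.prodMap B) ∘L e.toContinuousLinearMap
  let Y : E →L[ℂ] E := e.symm.toContinuousLinearMap ∘L
    ((T.comp (ContinuousLinearMap.snd ℂ H H)).prod 0) ∘L e.toContinuousLinearMap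
  have hRfst : ∀ z : E, (R z).fst = Q z.fst := fun z => rfl
  have hRsnd : ∀ z : E, (R z).snd = B z.snd := fun z => rfl
  have hRpos : R.IsPositive := by
    constructor
    · intro z w
      show (⟪R z, w⟫ : ℂ) = ⟪z, R w⟫
      rw [WithLp.prod_inner_apply, WithLp.prod_inner_apply]
      exact congrArg₂ (· + ·) (hQ.isSelfAdjoint.isSymmetric z.fst w.fst)
        (hB.isSelfAdjoint.isSymmetric z.snd w.snd)
    · intro z
      rw [ContinuousLinearMap.reApplyInnerSelf_apply]
      have : (⟪R z, z⟫ : ℂ) = ⟪Q z.fst, z.fst⟫ + ⟪B z.snd, z.snd⟫ := by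
        exact WithLp.prod_inner_apply ..
      rw [this, map_add]
      exact add_nonneg (hQ.re_inner_nonneg_left z.fst) (hB.re_inner_nonneg_left z.snd)
  have hRnn : (0 : E →L[ℂ] E) ≤ R := (ContinuousLinearMap.nonneg_iff_isPositive R).mpr hRpos
  have hRsa : IsSelfAdjoint R := hRpos.isSelfAdjoint
  have hRRsa : IsSelfAdjoint (R * R) := by
    rw [IsSelfAdjoint, star_mul, hRsa.star_eq]
  have hYRR : Commute Y (R * R) := by
    show Y * (R * R) = R * R * Y
    ext1 z
    have h1 : (Y * (R * R)) z = Y (R (R z)) := rfl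
    have h2 : (R * R * Y) z = R (R (Y z)) := rfl
    rw [h1, h2]
    apply (WithLp.equiv 2 (H × H)).injective
    apply Prod.ext
    · show T (B (B z.snd)) = Q (Q (T z.snd))
      rw [hBsq, hQsq]
    · show (0 : H) = B (B 0)
      simp
  have hYR : Commute Y R := by
    rw [← sqrt_of_sq hRnn]
    exact commute_cfc_of_commute hRRsa hYRR Real.sqrt
  intro f
  have := congrArg (fun (W : E →L[ℂ] E) => (W ((WithLp.equiv 2 (H × H)).symm (0, f))).fst) hYR.eq
  exact this
set_option maxHeartbeats 1000000

/-- Refined polar decomposition `T = C J |T|` of a bounded `C`-symmetric operator.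
Here `absT` plays the role of `|T| = √(T*T)`: it is the (unique) positive
selfadjoint operator whose square is `T*T`. -/
theorem refined_polar_decomposition {H : Type*} [NormedAddCommGroup H]
    [InnerProductSpace ℂ H] [CompleteSpace H] (C : H → H)
    (hadd : ∀ f g, C (f + g) = C f + C g)
    (hsmul : ∀ (c : ℂ) (f : H), C (c • f) = conj c • C f)
    (hinv : ∀ f, C (C f) = f)
    (hinner : ∀ f g, ⟪C f, C g⟫ = ⟪g, f⟫)
    (T absT : H →L[ℂ] H)
    (hsym : ∀ f, T f = C (ContinuousLinearMap.adjoint T (C f)))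
    (habs_sa : ContinuousLinearMap.adjoint absT = absT)
    (habs_pos : ∀ f, 0 ≤ (⟪absT f, f⟫).re)
    (habs_sq : absT ∘L absT = ContinuousLinearMap.adjoint T ∘L T) :
    ∃ J : H → H,
      (∀ f g, J (f + g) = J f + J g) ∧
      (∀ (c : ℂ) (f : H), J (c • f) = conj c • J f) ∧
      (∀ f, J (J f) = f) ∧
      (∀ f g, ⟪J f, J g⟫ = ⟪g, f⟫) ∧
      (∀ f, J (absT f) = absT (J f)) ∧
      (∀ f, T f = C (J (absT f))) := by
  classical
  set Tadj := ContinuousLinearMap.adjoint T with hTadjdef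
  have hC0 : C 0 = 0 := by simpa using hsmul 0 0
  have hCneg : ∀ f, C (-f) = - C f := by
    intro f; have := hsmul (-1) f; simpa using this
  have hCsub : ∀ f g, C (f - g) = C f - C g := by
    intro f g; rw [sub_eq_add_neg, hadd, hCneg, sub_eq_add_neg]
  have hCnorm : ∀ f, ‖C f‖ = ‖f‖ := by
    intro f
    rw [@norm_eq_sqrt_re_inner ℂ _ _ _ _ (C f), @norm_eq_sqrt_re_inner ℂ _ _ _ _ f, hinner f f]
  have hCsw : ∀ f g, ⟪C f, g⟫ = ⟪C g, f⟫ := by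
    intro f g
    conv_lhs => rw [← hinv g]
    exact hinner f (C g)
  have hTadjC : ∀ f, Tadj (C f) = C (T f) := by
    intro f
    have h := congrArg C (hsym f)
    rw [hinv] at h
    exact h.symm
  have hTC : ∀ f, T (C f) = C (Tadj f) := by
    intro f; rw [hsym (C f), hinv]
  have habs_symm : ∀ x y, ⟪absT x, y⟫ = ⟪x, absT y⟫ := by
    intro x y
    conv_lhs => rw [← habs_sa]
    exact ContinuousLinearMap.adjoint_inner_left absT y x
  have habs_sq' : ∀ x, absT (absT x) = Tadj (T x) := by
    intro x
    have := ContinuousLinearMap.ext_iff.mp habs_sq x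
    simpa using this
  have habs_inner : ∀ f g, ⟪absT f, absT g⟫ = ⟪T f, T g⟫ := by
    intro f g
    rw [habs_symm f (absT g), habs_sq' g, hTadjdef,
      ContinuousLinearMap.adjoint_inner_right]
  have hnormT : ∀ f, ‖absT f‖ = ‖T f‖ := by
    intro f
    rw [@norm_eq_sqrt_re_inner ℂ _ _ _ _ (absT f), @norm_eq_sqrt_re_inner ℂ _ _ _ _ (T f),
      habs_inner f f]
  have hker_iff : ∀ f, absT f = 0 ↔ T f = 0 := by
    intro f
    rw [← norm_eq_zero (a := absT f), ← norm_eq_zero (a := T f), hnormT]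
  have hwd : ∀ f g : H, absT f = absT g → T f = T g := by
    intro f g h
    have h1 : absT (f - g) = 0 := by rw [map_sub, h, sub_self]
    have h2 := (hker_iff _).mp h1
    rw [map_sub, sub_eq_zero] at h2
    exact h2
  -- the operator Q = C absT C
  let Qlin : H →ₗ[ℂ] H :=
    { toFun := fun f => C (absT (C f))
      map_add' := by
        intro f g
        show C (absT (C (f + g))) = C (absT (C f)) + C (absT (C g))
        rw [hadd, map_add, hadd]
      map_smul' := by
        intro c f
        show C (absT (C (c • f))) = RingHom.id ℂ c • C (absT (C f))
        rw [hsmul, map_smul, hsmul]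
        simp }
  have hQbound : ∀ f, ‖Qlin f‖ ≤ ‖absT‖ * ‖f‖ := by
    intro f
    show ‖C (absT (C f))‖ ≤ ‖absT‖ * ‖f‖
    rw [hCnorm]
    calc ‖absT (C f)‖ ≤ ‖absT‖ * ‖C f‖ := absT.le_opNorm _
      _ = ‖absT‖ * ‖f‖ := by rw [hCnorm]
  let Q : H →L[ℂ] H := Qlin.mkContinuous ‖absT‖ hQbound
  have hQapp : ∀ f, Q f = C (absT (C f)) := fun f => rfl
  have hQsym : ∀ x y, ⟪Q x, y⟫ = ⟪x, Q y⟫ := by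
    intro x y
    show ⟪C (absT (C x)), y⟫ = ⟪x, C (absT (C y))⟫
    calc (⟪C (absT (C x)), y⟫ : ℂ) = ⟪C y, absT (C x)⟫ := hCsw _ _
      _ = ⟪absT (C y), C x⟫ := (habs_symm (C y) (C x)).symm
      _ = ⟪C (C (absT (C y))), C x⟫ := by rw [hinv]
      _ = ⟪x, C (absT (C y))⟫ := hinner _ _
  have hQpos : Q.IsPositive := by
    constructor
    · intro x y; exact hQsym x y
    · intro x
      rw [ContinuousLinearMap.reApplyInnerSelf_apply]
      have h1 : (⟪Q x, x⟫ : ℂ) = ⟪C x, absT (C x)⟫ := by rw [hQapp, hCsw]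
      have h2 : (⟪C x, absT (C x)⟫ : ℂ) = conj ⟪absT (C x), C x⟫ := (inner_conj_symm _ _).symm
      rw [h1, h2, RCLike.conj_re]
      exact habs_pos (C x)
  have habsTpos : absT.IsPositive := by
    constructor
    · intro x y; exact habs_symm x y
    · intro x
      rw [ContinuousLinearMap.reApplyInnerSelf_apply]
      exact habs_pos x
  have hQsq : ∀ x, Q (Q x) = T (Tadj x) := by
    intro x
    rw [hQapp, hQapp, hinv, habs_sq', hTC]
    exact (hsym (Tadj x)).symm
  have hkey : ∀ f, T (absT f) = Q (T f) :=
    intertwine absT Q T habsTpos hQpos habs_sq' hQsq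
  have hCT : ∀ f, C (T (absT f)) = absT (C (T f)) := by
    intro f
    rw [hkey f, hQapp, hinv]
  -- subspaces
  set K : Submodule ℂ H := LinearMap.ker (absT : H →ₗ[ℂ] H) with hKdef
  set M : Submodule ℂ H := Kᗮ with hMdef
  haveI hKcs : CompleteSpace K := (ContinuousLinearMap.isClosed_ker absT).completeSpace_coe
  haveI hMcs : CompleteSpace M := (Submodule.isClosed_orthogonal K).completeSpace_coe
  have hKmem : ∀ u : H, u ∈ K ↔ absT u = 0 := fun u => LinearMap.mem_ker
  have hmemM : ∀ f, absT f ∈ M := by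
    intro f
    rw [hMdef, Submodule.mem_orthogonal]
    intro u hu
    rw [← habs_symm, (hKmem u).mp hu, inner_zero_left]
  have hCTmem : ∀ f, C (T f) ∈ M := by
    intro f
    rw [hMdef, Submodule.mem_orthogonal]
    intro u hu
    have hTu : T u = 0 := (hker_iff u).mp ((hKmem u).mp hu)
    have h1 : (⟪T f, C u⟫ : ℂ) = 0 := by
      have h0 : Tadj (C u) = 0 := by rw [hTadjC, hTu, hC0]
      calc (⟪T f, C u⟫ : ℂ) = ⟪f, Tadj (C u)⟫ :=
            (ContinuousLinearMap.adjoint_inner_right T f (C u)).symm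
        _ = 0 := by rw [h0, inner_zero_right]
    calc (⟪u, C (T f)⟫ : ℂ) = conj ⟪C (T f), u⟫ := (inner_conj_symm u (C (T f))).symm
      _ = conj ⟪C u, T f⟫ := by rw [hCsw]
      _ = ⟪T f, C u⟫ := inner_conj_symm (T f) (C u)
      _ = 0 := h1
  -- restriction of absT to M and its range
  let absT' : H →L[ℂ] M := absT.codRestrict M hmemM
  have habsT'coe : ∀ f, (absT' f : H) = absT f := fun f => rfl
  set S : Submodule ℂ M := LinearMap.range (absT' : H →ₗ[ℂ] M) with hSdef
  have hSorth : Sᗮ = ⊥ := by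
    rw [Submodule.eq_bot_iff]
    intro x hx
    have h1 : ∀ f : H, (⟪absT f, (x : H)⟫ : ℂ) = 0 := by
      intro f
      have h := (Submodule.mem_orthogonal S x).mp hx (absT' f) (LinearMap.mem_range_self _ f)
      exact h
    have h2 : absT (x : H) = 0 := by
      have h := h1 (absT (x : H))
      rw [habs_symm] at h
      exact inner_self_eq_zero.mp h
    have hxK : (x : H) ∈ K := (hKmem _).mpr h2
    have h3 : (⟪(x : H), (x : H)⟫ : ℂ) = 0 :=
      (Submodule.mem_orthogonal K (x : H)).mp x.2 (x : H) hxK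
    have h4 : (x : H) = 0 := inner_self_eq_zero.mp h3
    exact Subtype.ext h4
  have hStop : S.topologicalClosure = ⊤ := Submodule.topologicalClosure_eq_top_iff.mpr hSorth
  have hSdense : Dense (S : Set M) := Submodule.dense_iff_topologicalClosure_eq_top.mpr hStop
  have hdr : DenseRange ((↑) : S → M) := hSdense.denseRange_val
  have hui : IsUniformInducing ((↑) : S → M) :=
    isUniformEmbedding_subtype_val.isUniformInducing
  -- choice of preimages
  let pick : S → H := fun s => (LinearMap.mem_range.mp s.2).choose
  have hpick : ∀ s : S, absT' (pick s) = (s : M) := fun s => (LinearMap.mem_range.mp s.2).choose_spec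
  have hpickabs : ∀ s : S, absT (pick s) = ((s : M) : H) := by
    intro s; exact congrArg Subtype.val (hpick s)
  let ψ : S → M := fun s => ⟨C (T (pick s)), hCTmem _⟩
  have hψcoe : ∀ s : S, (ψ s : H) = C (T (pick s)) := fun s => rfl
  have hψuc : UniformContinuous ψ := by
    apply Isometry.uniformContinuous
    apply Isometry.of_dist_eq
    intro s t
    rw [Subtype.dist_eq, Subtype.dist_eq, dist_eq_norm, dist_eq_norm]
    rw [hψcoe, hψcoe]
    rw [← hCsub, hCnorm, ← map_sub, ← hnormT, map_sub, hpickabs, hpickabs]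
    rfl
  set di := hui.isDenseInducing hdr with hdidef
  set J₀ : M → M := di.extend ψ with hJ₀def
  have hJ₀cont : Continuous J₀ := (uniformContinuous_uniformly_extend hui hdr hψuc).continuous
  have hJ₀ψ : ∀ s : S, J₀ (s : M) = ψ s := fun s => uniformly_extend_of_ind hui hdr hψuc s
  have hJ₀e : ∀ (f : H) (h : absT f ∈ M), J₀ ⟨absT f, h⟩ = ⟨C (T f), hCTmem f⟩ := by
    intro f h
    have hmem : (⟨absT f, h⟩ : M) ∈ S := LinearMap.mem_range.mpr ⟨f, Subtype.ext rfl⟩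
    have h2 := hJ₀ψ ⟨⟨absT f, h⟩, hmem⟩
    rw [h2]
    apply Subtype.ext
    rw [hψcoe]
    show C (T (pick ⟨⟨absT f, h⟩, hmem⟩)) = C (T f)
    congr 1
    apply hwd
    rw [hpickabs ⟨⟨absT f, h⟩, hmem⟩]
  have hJ₀add : ∀ x y : M, J₀ (x + y) = J₀ x + J₀ y := by
    intro x y
    refine hdr.induction_on₂ (p := fun a b : M => J₀ (a + b) = J₀ a + J₀ b) ?_ ?_ x y
    · exact isClosed_eq (hJ₀cont.comp (continuous_fst.add continuous_snd))
        ((hJ₀cont.comp continuous_fst).add (hJ₀cont.comp continuous_snd))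
    · intro s t
      have h1 : ((s : M) + (t : M)) = ((s + t : S) : M) := rfl
      rw [h1, hJ₀ψ, hJ₀ψ, hJ₀ψ]
      apply Subtype.ext
      show C (T (pick (s + t))) = C (T (pick s)) + C (T (pick t))
      rw [← hadd, ← map_add]
      congr 1
      apply hwd
      rw [map_add, hpickabs, hpickabs, hpickabs]
      rfl
  have hJ₀smul : ∀ (c : ℂ) (x : M), J₀ (c • x) = conj c • J₀ x := by
    intro c x
    refine hdr.induction_on (p := fun a : M => J₀ (c • a) = conj c • J₀ a) x ?_ ?_
    · exact isClosed_eq (hJ₀cont.comp (continuous_const_smul c))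
        (hJ₀cont.const_smul (conj c))
    · intro s
      have h1 : (c • (s : M)) = ((c • s : S) : M) := (Submodule.coe_smul c s).symm
      rw [h1, hJ₀ψ, hJ₀ψ]
      apply Subtype.ext
      rw [Submodule.coe_smul, hψcoe, hψcoe, ← hsmul, ← map_smul]
      congr 1
      apply hwd
      rw [hpickabs, map_smul, hpickabs]
      norm_cast
  have hJ₀norm : ∀ x : M, ‖J₀ x‖ = ‖x‖ := by
    intro x
    refine hdr.induction_on (p := fun a : M => ‖J₀ a‖ = ‖a‖) x ?_ ?_
    · exact isClosed_eq (continuous_norm.comp hJ₀cont) continuous_norm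
    · intro s
      rw [hJ₀ψ]
      show ‖(ψ s : H)‖ = ‖((s : M) : H)‖
      rw [hψcoe, hCnorm, ← hnormT, hpickabs]
  have hJ₀inner : ∀ x y : M, ⟪J₀ x, J₀ y⟫ = ⟪y, x⟫ :=
    antilinear_isometry_inner J₀ hJ₀add hJ₀smul hJ₀norm
  have hJ₀sym : ∀ x y : M, ⟪J₀ x, y⟫ = ⟪J₀ y, x⟫ := by
    intro x y
    refine hdr.induction_on₂ (p := fun a b : M => (⟪J₀ a, b⟫ : ℂ) = ⟪J₀ b, a⟫) ?_ ?_ x y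
    · exact isClosed_eq ((hJ₀cont.comp continuous_fst).inner continuous_snd)
        ((hJ₀cont.comp continuous_snd).inner continuous_fst)
    · intro s t
      rw [hJ₀ψ, hJ₀ψ]
      show (⟪(ψ s : H), ((t : M) : H)⟫ : ℂ) = ⟪(ψ t : H), ((s : M) : H)⟫
      rw [hψcoe, hψcoe, ← hpickabs, ← hpickabs]
      set f := pick s
      set g := pick t
      calc (⟪C (T f), absT g⟫ : ℂ) = ⟪absT (C (T f)), g⟫ := (habs_symm _ _).symm
        _ = ⟪C (T (absT f)), g⟫ := by rw [hCT]
        _ = ⟪C g, T (absT f)⟫ := hCsw _ _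
        _ = ⟪Tadj (C g), absT f⟫ := (ContinuousLinearMap.adjoint_inner_left T (absT f) (C g)).symm
        _ = ⟪C (T g), absT f⟫ := by rw [hTadjC]
  have hJ₀invol : ∀ x : M, J₀ (J₀ x) = x := by
    intro x
    apply ext_inner_right ℂ
    intro v
    rw [hJ₀sym (J₀ x) v, hJ₀inner v x]
  -- restriction of absT to M as an operator M → M
  let A' : M →L[ℂ] M := (absT.comp M.subtypeL).codRestrict M (fun x => hmemM x)
  have hA'coe : ∀ x : M, (A' x : H) = absT (x : H) := fun x => rfl
  have hJ₀A' : ∀ x : M, J₀ (A' x) = A' (J₀ x) := by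
    intro x
    refine hdr.induction_on (p := fun a : M => J₀ (A' a) = A' (J₀ a)) x ?_ ?_
    · exact isClosed_eq (hJ₀cont.comp A'.continuous) (A'.continuous.comp hJ₀cont)
    · intro s
      have h1 : A' (s : M) = ⟨absT (absT (pick s)), hmemM _⟩ := by
        apply Subtype.ext
        rw [hA'coe, ← hpickabs]
      rw [h1, hJ₀e (absT (pick s)) (hmemM _), hJ₀ψ]
      apply Subtype.ext
      rw [hA'coe, hψcoe]
      exact hCT (pick s)
  -- a conjugation on K via a Hilbert basis
  obtain ⟨w, b, hbcoe⟩ := exists_hilbertBasis ℂ K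
  let J₁ : K → K := fun x => b.repr.symm (star (b.repr x))
  have hJ₁add : ∀ x y : K, J₁ (x + y) = J₁ x + J₁ y := by
    intro x y
    show b.repr.symm (star (b.repr (x + y))) = _
    rw [map_add, star_add, map_add]
  have hJ₁smul : ∀ (c : ℂ) (x : K), J₁ (c • x) = conj c • J₁ x := by
    intro c x
    show b.repr.symm (star (b.repr (c • x))) = _
    rw [map_smul, star_smul, map_smul]
    rfl
  have hJ₁norm : ∀ x : K, ‖J₁ x‖ = ‖x‖ := by
    intro x
    show ‖b.repr.symm (star (b.repr x))‖ = ‖x‖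
    rw [LinearIsometryEquiv.norm_map, norm_star, LinearIsometryEquiv.norm_map]
  have hJ₁invol : ∀ x : K, J₁ (J₁ x) = x := by
    intro x
    show b.repr.symm (star (b.repr (b.repr.symm (star (b.repr x))))) = x
    rw [LinearIsometryEquiv.apply_symm_apply, star_star, LinearIsometryEquiv.symm_apply_apply]
  -- projections
  have hMK : Mᗮ = K := by rw [hMdef]; exact Submodule.orthogonal_orthogonal K
  set P : H →L[ℂ] M := Submodule.orthogonalProjectionOnto M with hPdef
  set P' : H →L[ℂ] K := Submodule.orthogonalProjectionOnto K with hP'def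
  have hdecomp : ∀ x : H, ((P' x : H) + (P x : H)) = x := by
    intro x
    exact Submodule.starProjection_add_starProjection_orthogonal (K := K) x
  have hKMinner : ∀ (u : K) (v : M), (⟪(u : H), (v : H)⟫ : ℂ) = 0 := by
    intro u v
    exact (Submodule.mem_orthogonal K (v : H)).mp v.2 (u : H) u.2
  have hMKinner : ∀ (v : M) (u : K), (⟪(v : H), (u : H)⟫ : ℂ) = 0 := by
    intro v u
    rw [← inner_conj_symm, hKMinner u v, map_zero]
  -- projections of members
  have hPM : ∀ v : M, P (v : H) = v := by
    intro v
    rw [hPdef]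
    exact Submodule.orthogonalProjectionOnto_mem_subspace_eq_self v
  have hP'K : ∀ u : K, P' (u : H) = u := by
    intro u
    rw [hP'def]
    exact Submodule.orthogonalProjectionOnto_mem_subspace_eq_self u
  have hPK : ∀ u : K, P (u : H) = 0 := by
    intro u
    rw [hPdef]
    apply Submodule.orthogonalProjectionOnto_apply_of_mem_orthogonal
    rw [hMK]
    exact u.2
  have hP'M : ∀ v : M, P' (v : H) = 0 := by
    intro v
    rw [hP'def]
    apply Submodule.orthogonalProjectionOnto_apply_of_mem_orthogonal
    rw [← hMdef]
    exact v.2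
  -- the conjugation J
  set J : H → H := fun x => ((J₀ (P x) : H) + (J₁ (P' x) : H)) with hJdef
  have hJform : ∀ f, J f = (J₀ (P f) : H) + (J₁ (P' f) : H) := fun f => rfl
  have hJadd : ∀ f g, J (f + g) = J f + J g := by
    intro f g
    rw [hJform, hJform, hJform, map_add, map_add, hJ₀add, hJ₁add]
    push_cast
    abel
  have hJsmul : ∀ (c : ℂ) (f : H), J (c • f) = conj c • J f := by
    intro c f
    rw [hJform, hJform, map_smul, map_smul, hJ₀smul, hJ₁smul, smul_add]
    push_cast
    rfl
  have hJnorm : ∀ f, ‖J f‖ = ‖f‖ := by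
    intro f
    have h1 : ‖J f‖ ^ 2 = ‖f‖ ^ 2 := by
      have ha : ‖(J₀ (P f) : H) + (J₁ (P' f) : H)‖ ^ 2
          = ‖(J₀ (P f) : H)‖ ^ 2 + ‖(J₁ (P' f) : H)‖ ^ 2 := by
        rw [@norm_add_sq ℂ _ _ _ _ (J₀ (P f) : H) (J₁ (P' f) : H),
          hMKinner (J₀ (P f)) (J₁ (P' f))]
        simp
      have hb : ‖f‖ ^ 2 = ‖(P' f : H)‖ ^ 2 + ‖(P f : H)‖ ^ 2 := by
        conv_lhs => rw [← hdecomp f]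
        rw [@norm_add_sq ℂ _ _ _ _ (P' f : H) (P f : H), hKMinner (P' f) (P f)]
        simp
      show ‖(J₀ (P f) : H) + (J₁ (P' f) : H)‖ ^ 2 = ‖f‖ ^ 2
      rw [ha, hb]
      have h2 : ‖(J₀ (P f) : H)‖ = ‖(P f : H)‖ := hJ₀norm (P f)
      have h3 : ‖(J₁ (P' f) : H)‖ = ‖(P' f : H)‖ := hJ₁norm (P' f)
      rw [h2, h3]
      ring
    have := congrArg Real.sqrt h1
    rwa [Real.sqrt_sq (norm_nonneg _), Real.sqrt_sq (norm_nonneg _)] at this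
  have hJinner : ∀ f g, ⟪J f, J g⟫ = ⟪g, f⟫ :=
    antilinear_isometry_inner J hJadd hJsmul hJnorm
  have hJinvol : ∀ f, J (J f) = f := by
    intro f
    have hPJ : P (J f) = J₀ (P f) := by
      rw [hJdef]
      show P ((J₀ (P f) : H) + (J₁ (P' f) : H)) = _
      rw [map_add, hPM (J₀ (P f)), hPK (J₁ (P' f)), add_zero]
    have hP'J : P' (J f) = J₁ (P' f) := by
      rw [hJdef]
      show P' ((J₀ (P f) : H) + (J₁ (P' f) : H)) = _
      rw [map_add, hP'M (J₀ (P f)), hP'K (J₁ (P' f)), zero_add]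
    show ((J₀ (P (J f)) : H) + (J₁ (P' (J f)) : H)) = f
    rw [hPJ, hP'J, hJ₀invol, hJ₁invol]
    rw [add_comm]
    exact hdecomp f
  have hJabs : ∀ f, J (absT f) = (J₀ ⟨absT f, hmemM f⟩ : H) := by
    intro f
    show ((J₀ (P (absT f)) : H) + (J₁ (P' (absT f)) : H)) = _
    have h1 : P (absT f) = ⟨absT f, hmemM f⟩ := hPM ⟨absT f, hmemM f⟩
    have h2 : P' (absT f) = 0 := hP'M ⟨absT f, hmemM f⟩
    rw [h1, h2]
    have h3 : J₁ 0 = 0 := by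
      show b.repr.symm (star (b.repr 0)) = 0
      rw [map_zero, star_zero, map_zero]
    rw [h3]
    simp
  have hJcomm : ∀ f, J (absT f) = absT (J f) := by
    intro f
    rw [hJabs f]
    have h1 : absT (J f) = absT (J₀ (P f) : H) := by
      show absT ((J₀ (P f) : H) + (J₁ (P' f) : H)) = _
      rw [map_add, (hKmem _).mp (J₁ (P' f)).2, add_zero]
    rw [h1]
    have h2 : (⟨absT f, hmemM f⟩ : M) = A' (P f) := by
      apply Subtype.ext
      rw [hA'coe]
      show absT f = absT (P f : H)
      conv_lhs => rw [← hdecomp f]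
      rw [map_add, (hKmem _).mp (P' f).2, zero_add]
    rw [h2, hJ₀A', hA'coe]
  have hJpolar : ∀ f, T f = C (J (absT f)) := by
    intro f
    rw [hJabs f, hJ₀e f (hmemM f)]
    show T f = C (C (T f))
    rw [hinv]
  exact ⟨J, hJadd, hJsmul, hJinvol, hJinner, hJcomm, hJpolar⟩
end

section
/- For a bounded C-symmetric operator T on a complex Hilbert space H, ‖T‖ = sup over unit vectors u of |⟨T u, C u⟩|. -/
open scoped ComplexConjugate

local notation "⟪" x ", " y "⟫" => @inner ℂ _ _ x y

/-!
Write `[u, v] = ⟨Tu, Cv⟩`. Since `T = C T* C`, this form is symmetric, so polarization gives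
`4 [u, v] = [u + v, u + v] - [u - v, u - v]`; with `M` the supremum of `|[u, u]|` over unit
vectors, homogeneity and the parallelogram law give `|[u, v]| ≤ M` for unit `u`, `v`.
Choosing `v = C (Tu) / ‖Tu‖` makes `[u, v] = ‖Tu‖`, hence `‖T‖ ≤ M`; the reverse inequality
is Cauchy–Schwarz together with `‖Cu‖ = ‖u‖`.
-/

section

variable {𝕜 H : Type*} [RCLike 𝕜] [NormedAddCommGroup H] [InnerProductSpace 𝕜 H]

/-- The paper's `[Tu, v]`. Mathlib's inner product is conjugate-linear in its first argument,
so this form is conjugate-bilinear rather than bilinear. -/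
def conjForm (T : H →L[𝕜] H) (C : H → H) (u v : H) : 𝕜 := inner 𝕜 (T u) (C v)

theorem norm_map_of_inner_map_map {C : H → H}
    (hinner : ∀ f g, inner 𝕜 (C f) (C g) = inner 𝕜 g f) (f : H) : ‖C f‖ = ‖f‖ := by
  have h : (‖C f‖ : 𝕜) ^ 2 = (‖f‖ : 𝕜) ^ 2 := by
    rw [← inner_self_eq_norm_sq_to_K, ← inner_self_eq_norm_sq_to_K, hinner]
  exact_mod_cast (sq_eq_sq₀ (norm_nonneg _) (norm_nonneg _)).mp (by exact_mod_cast h)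

theorem conjForm_comm [CompleteSpace H] {C : H → H}
    (hinner : ∀ f g, inner 𝕜 (C f) (C g) = inner 𝕜 g f) {T : H →L[𝕜] H}
    (hsym : ∀ f, T f = C (T.adjoint (C f))) (u v : H) : conjForm T C u v = conjForm T C v u :=
  calc inner 𝕜 (T u) (C v) = inner 𝕜 (C (T.adjoint (C u))) (C v) := by rw [← hsym]
    _ = inner 𝕜 v (T.adjoint (C u)) := hinner _ _
    _ = inner 𝕜 (T v) (C u) := T.adjoint_inner_right v (C u)

theorem conjForm_smul_smul {C : H → H} (hsmul : ∀ (c : 𝕜) (f : H), C (c • f) = conj c • C f)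
    (T : H →L[𝕜] H) (c : 𝕜) (w : H) :
    conjForm T C (c • w) (c • w) = conj c ^ 2 * conjForm T C w w := by
  simp only [conjForm, map_smul, hsmul, inner_smul_left, inner_smul_right]
  ring

theorem conjForm_polarization {C : H → H} (hadd : ∀ f g, C (f + g) = C f + C g) {T : H →L[𝕜] H}
    (hcomm : ∀ u v, conjForm T C u v = conjForm T C v u) (u v : H) :
    4 * conjForm T C u v = conjForm T C (u + v) (u + v) - conjForm T C (u - v) (u - v) := by
  have hsub : C (u - v) = C u - C v := (AddMonoidHom.mk' C hadd).map_sub u v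
  have hvu := hcomm v u
  simp only [conjForm, hadd, hsub, map_add, map_sub, inner_add_left, inner_add_right,
    inner_sub_left, inner_sub_right] at hvu ⊢
  rw [hvu]
  ring

theorem norm_conjForm_le_mul_norm_sq {C : H → H}
    (hsmul : ∀ (c : 𝕜) (f : H), C (c • f) = conj c • C f) {T : H →L[𝕜] H} {M : ℝ}
    (hM : ∀ u, ‖u‖ = 1 → ‖conjForm T C u u‖ ≤ M) (w : H) :
    ‖conjForm T C w w‖ ≤ M * ‖w‖ ^ 2 := by
  rcases eq_or_ne w 0 with rfl | hw
  · simp [conjForm]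
  have hw' : (‖w‖ : 𝕜) ≠ 0 := by simpa using hw
  have hscale : w = (‖w‖ : 𝕜) • (‖w‖⁻¹ : 𝕜) • w := by
    rw [smul_smul, mul_inv_cancel₀ hw', one_smul]
  conv_lhs => rw [hscale, conjForm_smul_smul hsmul, RCLike.conj_ofReal, norm_mul, norm_pow,
    RCLike.norm_ofReal, abs_norm, mul_comm]
  exact mul_le_mul_of_nonneg_right (hM _ (norm_smul_inv_norm hw)) (by positivity)

theorem norm_conjForm_le_opNorm {C : H → H}
    (hinner : ∀ f g, inner 𝕜 (C f) (C g) = inner 𝕜 g f) (T : H →L[𝕜] H) (u v : H) :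
    ‖conjForm T C u v‖ ≤ ‖T‖ * ‖u‖ * ‖v‖ :=
  calc ‖inner 𝕜 (T u) (C v)‖ ≤ ‖T u‖ * ‖C v‖ := norm_inner_le_norm _ _
    _ ≤ ‖T‖ * ‖u‖ * ‖v‖ := by
      rw [norm_map_of_inner_map_map hinner]
      exact mul_le_mul_of_nonneg_right (T.le_opNorm u) (norm_nonneg v)

theorem two_mul_norm_conjForm_le {C : H → H} (hadd : ∀ f g, C (f + g) = C f + C g)
    {T : H →L[𝕜] H} (hcomm : ∀ u v, conjForm T C u v = conjForm T C v u) {M : ℝ}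
    (hM : ∀ w, ‖conjForm T C w w‖ ≤ M * ‖w‖ ^ 2) (u v : H) :
    2 * ‖conjForm T C u v‖ ≤ M * (‖u‖ ^ 2 + ‖v‖ ^ 2) := by
  have h4 : 4 * ‖conjForm T C u v‖ ≤ 2 * (M * (‖u‖ ^ 2 + ‖v‖ ^ 2)) :=
    calc 4 * ‖conjForm T C u v‖ = ‖4 * conjForm T C u v‖ := by simp [norm_mul]
      _ = ‖conjForm T C (u + v) (u + v) - conjForm T C (u - v) (u - v)‖ := by
        rw [conjForm_polarization hadd hcomm]
      _ ≤ ‖conjForm T C (u + v) (u + v)‖ + ‖conjForm T C (u - v) (u - v)‖ := norm_sub_le _ _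
      _ ≤ M * ‖u + v‖ ^ 2 + M * ‖u - v‖ ^ 2 := add_le_add (hM _) (hM _)
      _ = 2 * (M * (‖u‖ ^ 2 + ‖v‖ ^ 2)) := by
        rw [← mul_add, parallelogram_law_with_norm 𝕜]
        ring
  linarith

theorem opNorm_le_of_norm_conjForm_le {C : H → H}
    (hinner : ∀ f g, inner 𝕜 (C f) (C g) = inner 𝕜 g f)
    (hsmul : ∀ (c : 𝕜) (f : H), C (c • f) = conj c • C f) (hinv : ∀ f, C (C f) = f)
    {T : H →L[𝕜] H} {M : ℝ} (hM0 : 0 ≤ M)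
    (hM : ∀ u v, ‖u‖ = 1 → ‖v‖ = 1 → ‖conjForm T C u v‖ ≤ M) : ‖T‖ ≤ M := by
  refine T.opNorm_le_of_unit_norm hM0 fun u hu => ?_
  rcases eq_or_ne (T u) 0 with h0 | h0
  · simpa [h0] using hM0
  have h0' : (‖T u‖ : 𝕜) ≠ 0 := by simpa using h0
  set v := (‖T u‖⁻¹ : 𝕜) • C (T u)
  have hv : ‖v‖ = 1 := by
    rw [norm_smul, norm_map_of_inner_map_map hinner, norm_inv, RCLike.norm_ofReal, abs_norm,
      inv_mul_cancel₀ (norm_ne_zero_iff.mpr h0)]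
  have huv : conjForm T C u v = ‖T u‖ := by
    rw [conjForm, hsmul, hinv, map_inv₀, RCLike.conj_ofReal, inner_smul_right,
      inner_self_eq_norm_sq_to_K]
    field_simp
  simpa [huv] using hM u v hu hv

theorem opNorm_le_of_norm_conjForm_self_le [CompleteSpace H] {C : H → H}
    (hadd : ∀ f g, C (f + g) = C f + C g)
    (hsmul : ∀ (c : 𝕜) (f : H), C (c • f) = conj c • C f) (hinv : ∀ f, C (C f) = f)
    (hinner : ∀ f g, inner 𝕜 (C f) (C g) = inner 𝕜 g f) {T : H →L[𝕜] H}
    (hsym : ∀ f, T f = C (T.adjoint (C f))) {M : ℝ} (hM0 : 0 ≤ M)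
    (hM : ∀ u, ‖u‖ = 1 → ‖conjForm T C u u‖ ≤ M) : ‖T‖ ≤ M := by
  have hquad := norm_conjForm_le_mul_norm_sq hsmul hM
  refine opNorm_le_of_norm_conjForm_le hinner hsmul hinv hM0 fun u v hu hv => ?_
  have := two_mul_norm_conjForm_le hadd (conjForm_comm hinner hsym) hquad u v
  rw [hu, hv] at this
  linarith

end

theorem norm_eq_sup_bilinear_form_general {H : Type*} [NormedAddCommGroup H]
    [InnerProductSpace ℂ H] [CompleteSpace H] (C : H → H)
    (hadd : ∀ f g, C (f + g) = C f + C g)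
    (hsmul : ∀ (c : ℂ) (f : H), C (c • f) = conj c • C f)
    (hinv : ∀ f, C (C f) = f)
    (hinner : ∀ f g, ⟪C f, C g⟫ = ⟪g, f⟫)
    (T : H →L[ℂ] H)
    (hsym : ∀ f, T f = C (ContinuousLinearMap.adjoint T (C f))) :
    ‖T‖ = sSup {r : ℝ | ∃ u : H, ‖u‖ = 1 ∧ r = ‖⟪T u, C u⟫‖} := by
  have hle : ∀ r ∈ {r : ℝ | ∃ u : H, ‖u‖ = 1 ∧ r = ‖⟪T u, C u⟫‖}, r ≤ ‖T‖ := by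
    rintro _ ⟨u, hu, rfl⟩
    exact (norm_conjForm_le_opNorm hinner T u u).trans_eq (by rw [hu, mul_one, mul_one])
  refine le_antisymm ?_ (Real.sSup_le hle (norm_nonneg T))
  refine opNorm_le_of_norm_conjForm_self_le hadd hsmul hinv hinner hsym
    (Real.sSup_nonneg fun r ⟨_, _, hr⟩ => hr ▸ norm_nonneg _) fun u hu => ?_
  exact le_csSup ⟨‖T‖, hle⟩ ⟨u, hu, rfl⟩

/-- For a bounded `C`-symmetric operator, `‖T‖` is the supremum of `|⟨Tu, Cu⟩|`
over unit vectors `u`. -/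
theorem norm_eq_sup_bilinear_form {H : Type*} [NormedAddCommGroup H]
    [InnerProductSpace ℂ H] [CompleteSpace H] [Nontrivial H] (C : H → H)
    (hadd : ∀ f g, C (f + g) = C f + C g)
    (hsmul : ∀ (c : ℂ) (f : H), C (c • f) = conj c • C f)
    (hinv : ∀ f, C (C f) = f)
    (hinner : ∀ f g, ⟪C f, C g⟫ = ⟪g, f⟫)
    (T : H →L[ℂ] H)
    (hsym : ∀ f, T f = C (ContinuousLinearMap.adjoint T (C f))) :
    ‖T‖ = sSup {r : ℝ | ∃ u : H, ‖u‖ = 1 ∧ r = ‖⟪T u, C u⟫‖} :=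
  norm_eq_sup_bilinear_form_general C hadd hsmul hinv hinner T hsym
end

section
/- Let T be a symmetric complex n×n matrix (Tᵀ = T), and let λ₀ ≥ λ₁ ≥ ... ≥ λ_{n-1} ≥ 0 be the singular values of T in decreasing order. Then the largest singular value satisfies λ₀ = max over unit vectors u ∈ ℂⁿ of Re(uᵀ T u). -/
open scoped ComplexConjugate
open Matrix

private lemma dot_normSq' {n : ℕ} (z : Fin n → ℂ) :
    (star z ⬝ᵥ z).re = ∑ i, Complex.normSq (z i) := by
  simp [dotProduct, Complex.re_sum, ← Complex.normSq_eq_conj_mul_self]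

private lemma rayleigh_aux {n : ℕ} (B : Matrix (Fin n) (Fin n) ℂ) (hB : B.IsHermitian)
    (c : ℝ) (hc : ∀ i, hB.eigenvalues i ≤ c) (u : Fin n → ℂ) :
    (star u ⬝ᵥ (B *ᵥ u)).re ≤ c * (star u ⬝ᵥ u).re := by
  classical
  set U : Matrix (Fin n) (Fin n) ℂ := (hB.eigenvectorUnitary : Matrix (Fin n) (Fin n) ℂ) with hU
  have hUU : U * star U = 1 := mem_unitaryGroup_iff.mp hB.eigenvectorUnitary.2
  set y : Fin n → ℂ := star U *ᵥ u with hy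
  have hsy : star y = star u ᵥ* U := by
    rw [hy, star_mulVec, star_eq_conjTranspose, conjTranspose_conjTranspose]
  have h1 : star u ⬝ᵥ (B *ᵥ u)
      = star y ⬝ᵥ ((diagonal ((RCLike.ofReal : ℝ → ℂ) ∘ hB.eigenvalues)) *ᵥ y) := by
    conv_lhs => rw [hB.spectral_theorem, Unitary.conjStarAlgAut_apply, ← mulVec_mulVec, ← mulVec_mulVec, dotProduct_mulVec]
    rw [hsy, hy]
  have h2 : star y ⬝ᵥ y = star u ⬝ᵥ u := by
    rw [hsy, hy, ← dotProduct_mulVec, mulVec_mulVec, hUU, one_mulVec]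
  have h3 : (star y ⬝ᵥ ((diagonal ((RCLike.ofReal : ℝ → ℂ) ∘ hB.eigenvalues)) *ᵥ y)).re
      = ∑ i, hB.eigenvalues i * Complex.normSq (y i) := by
    simp [dotProduct, mulVec_diagonal, Complex.re_sum]
    refine Finset.sum_congr rfl fun i _ => ?_
    simp [Complex.normSq]; ring
  rw [h1, h3, ← h2, dot_normSq']
  calc ∑ i, hB.eigenvalues i * Complex.normSq (y i)
      ≤ ∑ i, c * Complex.normSq (y i) :=
        Finset.sum_le_sum fun i _ => mul_le_mul_of_nonneg_right (hc i) (Complex.normSq_nonneg _)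
    _ = c * ∑ i, Complex.normSq (y i) := by rw [Finset.mul_sum]

open scoped ComplexOrder in
private lemma eig_nonneg_aux {n : ℕ} (T : Matrix (Fin n) (Fin n) ℂ)
    (hH : (T.conjTranspose * T).IsHermitian) (i : Fin n) : 0 ≤ hH.eigenvalues i :=
  (Matrix.posSemidef_conjTranspose_mul_self T).eigenvalues_nonneg i

private lemma star_mulVec_star_of_symm {n : ℕ} (T : Matrix (Fin n) (Fin n) ℂ)
    (hsymm : T.transpose = T) (x : Fin n → ℂ) :
    star (T *ᵥ star x) = T.conjTranspose *ᵥ x := by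
  funext i
  simp only [Pi.star_apply, mulVec, dotProduct, star_sum, star_mul', star_star,
    conjTranspose_apply]
  refine Finset.sum_congr rfl fun j _ => ?_
  have h : T j i = T i j := by conv_lhs => rw [← hsymm, transpose_apply]
  rw [h]

/-- For a complex symmetric `n × n` matrix `T`, the largest singular value
(the largest eigenvalue of `|T| = √(T*T)`) equals the maximum of `Re (uᵀ T u)`
over unit vectors `u ∈ ℂⁿ`. -/
theorem largest_singular_value_eq_max_re_bilinear (n : ℕ) [NeZero n]
    (T : Matrix (Fin n) (Fin n) ℂ) (hsymm : T.transpose = T)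
    (hH : (T.conjTranspose * T).IsHermitian)
    (μ : Fin n → ℝ) (hμ : ∀ i, μ i = Real.sqrt (hH.eigenvalues i))
    (lam0 : ℝ) (hlam0 : IsGreatest (Set.range μ) lam0) :
    IsGreatest {r : ℝ | ∃ u : EuclideanSpace ℂ (Fin n), ‖u‖ = 1 ∧
      r = (∑ i, ∑ j, u i * T i j * u j).re} lam0 := by
  classical
  obtain ⟨i0, hi0⟩ := hlam0.1
  have heig_nonneg : ∀ i, 0 ≤ hH.eigenvalues i := eig_nonneg_aux T hH
  have hμ_nonneg : ∀ i, 0 ≤ μ i := fun i => (hμ i).symm ▸ Real.sqrt_nonneg _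
  have hlam0_nonneg : 0 ≤ lam0 := by rw [← hi0]; exact hμ_nonneg i0
  have heig_le : ∀ i, hH.eigenvalues i ≤ lam0 ^ 2 := by
    intro i
    have h1 : μ i ≤ lam0 := hlam0.2 ⟨i, rfl⟩
    calc hH.eigenvalues i = Real.sqrt (hH.eigenvalues i) ^ 2 :=
          (Real.sq_sqrt (heig_nonneg i)).symm
      _ = μ i ^ 2 := by rw [hμ i]
      _ ≤ lam0 ^ 2 := pow_le_pow_left₀ (hμ_nonneg i) h1 2
  have hnormsq : ∀ x : EuclideanSpace ℂ (Fin n),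
      (star (x : Fin n → ℂ) ⬝ᵥ (x : Fin n → ℂ)).re = ‖x‖ ^ 2 := by
    intro x
    have h := @inner_self_eq_norm_sq ℂ _ _ _ _ x
    rw [EuclideanSpace.inner_eq_star_dotProduct, dotProduct_comm] at h
    exact h
  have hS : ∀ x : Fin n → ℂ,
      (∑ i, ∑ j, x i * T i j * x j) = x ⬝ᵥ (T *ᵥ x) := by
    intro x
    simp [dotProduct, Matrix.mulVec, Finset.mul_sum, mul_assoc]
  constructor
  · -- membership
    set v : EuclideanSpace ℂ (Fin n) := hH.eigenvectorBasis i0 with hv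
    set vf : Fin n → ℂ := (v : Fin n → ℂ) with hvf
    have hvnorm : ‖v‖ = 1 := hH.eigenvectorBasis.orthonormal.1 i0
    have hvmul : (T.conjTranspose * T) *ᵥ vf = hH.eigenvalues i0 • vf :=
      hH.mulVec_eigenvectorBasis i0
    have heig0 : hH.eigenvalues i0 = lam0 ^ 2 := by
      have h2 : Real.sqrt (hH.eigenvalues i0) = lam0 := by rw [← hμ i0, hi0]
      rw [← Real.sq_sqrt (heig_nonneg i0), h2]
    set a : Fin n → ℂ := star (T *ᵥ vf) with ha
    have hTv : T *ᵥ vf = star a := by rw [ha, star_star]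
    have hTa : T *ᵥ a = (lam0 ^ 2 : ℝ) • star vf := by
      have h1 : star (T *ᵥ a) = (lam0 ^ 2 : ℝ) • vf := by
        rw [ha, star_mulVec_star_of_symm T hsymm, Matrix.mulVec_mulVec, hvmul, heig0]
      have h2 := congrArg star h1
      rw [star_star, star_smul, star_trivial] at h2
      exact h2
    have hvf0 : vf ≠ 0 := by
      intro h
      have h0 : v = 0 := by ext j; exact congrFun h j
      rw [h0, norm_zero] at hvnorm
      exact one_ne_zero hvnorm.symm
    have hkey : ∃ w : Fin n → ℂ, w ≠ 0 ∧ T *ᵥ w = (lam0 : ℂ) • star w := by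
      by_cases hw : a + (lam0 : ℂ) • vf = 0
      · refine ⟨Complex.I • vf, smul_ne_zero Complex.I_ne_zero hvf0, ?_⟩
        have haeq : a = -((lam0 : ℂ) • vf) := eq_neg_of_add_eq_zero_left hw
        rw [mulVec_smul, hTv, haeq]
        funext j
        simp only [Pi.smul_apply, Pi.star_apply, Pi.neg_apply, smul_eq_mul, star_neg,
          star_mul', Complex.star_def, Complex.conj_I, Complex.conj_ofReal]
        ring
      · refine ⟨a + (lam0 : ℂ) • vf, hw, ?_⟩
        rw [mulVec_add, mulVec_smul, hTv, hTa]
        funext j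
        simp only [Pi.add_apply, Pi.smul_apply, Pi.star_apply, smul_eq_mul, star_add,
          star_mul', Complex.star_def, Complex.conj_ofReal, Complex.real_smul,
          Complex.ofReal_pow]
        ring
    obtain ⟨w, hw0, hww⟩ := hkey
    set W : EuclideanSpace ℂ (Fin n) := (WithLp.equiv 2 (Fin n → ℂ)).symm w with hW
    have hW0 : W ≠ 0 := fun h => hw0 (congrArg (WithLp.equiv 2 (Fin n → ℂ)) h)
    have hfun : T *ᵥ ((‖W‖⁻¹ : ℝ) • w) = (lam0 : ℂ) • star ((‖W‖⁻¹ : ℝ) • w) := by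
      rw [mulVec_smul, hww]
      funext j
      simp only [Pi.smul_apply, Pi.star_apply, smul_eq_mul, Complex.real_smul,
        star_mul', Complex.star_def, Complex.conj_ofReal]
      ring
    set u0 : EuclideanSpace ℂ (Fin n) := (‖W‖⁻¹ : ℝ) • W with hu0def
    have hu0 : ‖u0‖ = 1 := by
      rw [hu0def, norm_smul]
      simp [norm_ne_zero_iff.mpr hW0]
    refine ⟨u0, hu0, ?_⟩
    have hone : (star ((‖W‖⁻¹ : ℝ) • w) ⬝ᵥ ((‖W‖⁻¹ : ℝ) • w)).re = 1 := by
      have h := hnormsq u0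
      rw [hu0] at h
      calc (star ((‖W‖⁻¹ : ℝ) • w) ⬝ᵥ ((‖W‖⁻¹ : ℝ) • w)).re
          = (star (u0 : Fin n → ℂ) ⬝ᵥ (u0 : Fin n → ℂ)).re := rfl
        _ = 1 ^ 2 := h
        _ = 1 := one_pow 2
    have hgoal : lam0 = (∑ i, ∑ j, ((‖W‖⁻¹ : ℝ) • w) i * T i j * ((‖W‖⁻¹ : ℝ) • w) j).re := by
      rw [hS, hfun]
      have hd : ((‖W‖⁻¹ : ℝ) • w) ⬝ᵥ ((lam0 : ℂ) • star ((‖W‖⁻¹ : ℝ) • w))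
          = (lam0 : ℂ) * (star ((‖W‖⁻¹ : ℝ) • w) ⬝ᵥ ((‖W‖⁻¹ : ℝ) • w)) := by
        simp only [dotProduct, Pi.smul_apply, Pi.star_apply, smul_eq_mul, Finset.mul_sum]
        exact Finset.sum_congr rfl fun j _ => by ring
      rw [hd, Complex.re_ofReal_mul, hone, mul_one]
    exact hgoal
  · rintro r ⟨u, hu1, rfl⟩
    set uf : Fin n → ℂ := (u : Fin n → ℂ) with huf
    have hray := rayleigh_aux (T.conjTranspose * T) hH (lam0 ^ 2) heig_le uf
    set x : EuclideanSpace ℂ (Fin n) := (WithLp.equiv 2 (Fin n → ℂ)).symm (star uf) with hx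
    set y : EuclideanSpace ℂ (Fin n) := (WithLp.equiv 2 (Fin n → ℂ)).symm (T *ᵥ uf) with hy
    have hxy : (inner ℂ x y : ℂ) = uf ⬝ᵥ (T *ᵥ uf) := by
      show (T *ᵥ uf) ⬝ᵥ star (star uf) = _
      rw [star_star, dotProduct_comm]
    have hxnorm : ‖x‖ = 1 := by
      rw [← hu1, EuclideanSpace.norm_eq, EuclideanSpace.norm_eq]
      congr 1
      refine Finset.sum_congr rfl fun j _ => ?_
      simp [hx, huf]
    have hynorm : ‖y‖ ≤ lam0 := by
      have h2 : ‖y‖ ^ 2 = (star uf ⬝ᵥ ((T.conjTranspose * T) *ᵥ uf)).re := by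
        rw [← hnormsq y]
        congr 1
        show star (T *ᵥ uf) ⬝ᵥ (T *ᵥ uf) = star uf ⬝ᵥ ((T.conjTranspose * T) *ᵥ uf)
        rw [star_mulVec, ← dotProduct_mulVec, mulVec_mulVec]
      have h3 : ‖y‖ ^ 2 ≤ lam0 ^ 2 := by
        rw [h2]
        have hn := hnormsq u
        rw [hu1] at hn
        calc (star uf ⬝ᵥ ((T.conjTranspose * T) *ᵥ uf)).re
            ≤ lam0 ^ 2 * (star uf ⬝ᵥ uf).re := hray
          _ = lam0 ^ 2 := by rw [hn]; ring
      calc ‖y‖ = Real.sqrt (‖y‖ ^ 2) := (Real.sqrt_sq (norm_nonneg y)).symm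
        _ ≤ Real.sqrt (lam0 ^ 2) := Real.sqrt_le_sqrt h3
        _ = lam0 := Real.sqrt_sq hlam0_nonneg
    calc (∑ i, ∑ j, u i * T i j * u j).re = (inner ℂ x y : ℂ).re := by rw [hS u, hxy]
      _ ≤ ‖(inner ℂ x y : ℂ)‖ := Complex.re_le_norm _
      _ ≤ ‖x‖ * ‖y‖ := norm_inner_le_norm x y
      _ = ‖y‖ := by rw [hxnorm, one_mul]
      _ ≤ lam0 := hynorm
end

section
/- Let T be a symmetric complex n×n matrix with singular values λ₀ ≥ λ₁ ≥ ... arranged in decreasing order. Then for each k with 2k < n, λ_{2k} = min over subspaces V ⊆ ℂⁿ of codimension k of max over unit vectors u ∈ V of Re(uᵀ T u). -/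
open scoped ComplexConjugate InnerProductSpace

namespace MinimaxAux

variable {n : ℕ}

/-- The antilinear operator `u ↦ conj (T *ᵥ u)`. -/
noncomputable def Sop (T : Matrix (Fin n) (Fin n) ℂ) (u : EuclideanSpace ℂ (Fin n)) :
    EuclideanSpace ℂ (Fin n) := WithLp.toLp 2 (fun i => conj (T.mulVec u i))

lemma Sop_apply (T : Matrix (Fin n) (Fin n) ℂ) (u : EuclideanSpace ℂ (Fin n)) (i : Fin n) :
    Sop T u i = conj (∑ j, T i j * u j) := by
  simp [Sop, Matrix.mulVec, dotProduct]

lemma Sop_add (T : Matrix (Fin n) (Fin n) ℂ) (x y : EuclideanSpace ℂ (Fin n)) :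
    Sop T (x + y) = Sop T x + Sop T y := by
  ext i
  simp only [Sop_apply, PiLp.add_apply, mul_add, Finset.sum_add_distrib, map_add]

lemma Sop_smul (T : Matrix (Fin n) (Fin n) ℂ) (a : ℂ) (x : EuclideanSpace ℂ (Fin n)) :
    Sop T (a • x) = conj a • Sop T x := by
  ext i
  simp only [Sop_apply, PiLp.smul_apply, smul_eq_mul, map_mul, map_sum]
  rw [Finset.mul_sum]
  congr 1; funext j; ring

lemma Sop_inner (T : Matrix (Fin n) (Fin n) ℂ) (hsymm : T.transpose = T)
    (x y : EuclideanSpace ℂ (Fin n)) :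
    ⟪x, Sop T y⟫_ℂ = ⟪y, Sop T x⟫_ℂ := by
  simp only [PiLp.inner_apply, Sop_apply, RCLike.inner_apply, ← map_mul, ← map_sum]
  congr 1
  simp only [Finset.sum_mul]
  rw [Finset.sum_comm]
  congr 1; funext j; congr 1; funext i
  rw [show T j i = T.transpose i j from rfl, hsymm]
  ring

lemma Sop_Sop (T : Matrix (Fin n) (Fin n) ℂ) (hsymm : T.transpose = T)
    (u : EuclideanSpace ℂ (Fin n)) :
    Sop T (Sop T u) = (T.conjTranspose * T).mulVec u := by
  funext i
  have hconj : ∀ a b : Fin n, T.conjTranspose a b = conj (T a b) := by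
    intro a b
    rw [Matrix.conjTranspose_apply]
    rw [show T b a = T.transpose a b from rfl, hsymm]
    rfl
  simp only [Sop_apply, map_sum, map_mul, RingHomCompTriple.comp_apply, Complex.conj_conj,
    Matrix.mulVec, dotProduct, Matrix.mul_apply, hconj, RingHom.id_apply]
  simp only [Finset.sum_mul, Finset.mul_sum]
  rw [Finset.sum_comm]
  congr 1; funext j; congr 1; funext l; ring


open Module



lemma takagi_induction (T : Matrix (Fin n) (Fin n) ℂ) (hsymm : T.transpose = T) :
    ∀ (m : ℕ) (V : Submodule ℂ (EuclideanSpace ℂ (Fin n))), finrank ℂ V = m →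
    (∀ x ∈ V, Sop T x ∈ V) →
    ∃ v : Fin m → EuclideanSpace ℂ (Fin n), Orthonormal ℂ v ∧ (∀ i, v i ∈ V) ∧
      ∀ i, ∃ c : ℝ, 0 ≤ c ∧ Sop T (v i) = (c : ℂ) • v i := by
  intro m
  induction m with
  | zero =>
    intro V _ _
    exact ⟨fun i => i.elim0, ⟨fun i => i.elim0, fun i => i.elim0⟩, fun i => i.elim0,
      fun i => i.elim0⟩
  | succ m ih =>
    intro V hdim hinv
    have hfd : FiniteDimensional ℂ V := inferInstance
    have hnt : Nontrivial V := by
      apply Module.nontrivial_of_finrank_pos (R := ℂ)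
      omega
    -- the restricted endomorphism S ∘ S on V
    let A : Module.End ℂ V :=
      { toFun := fun x => ⟨Sop T (Sop T x), hinv _ (hinv _ x.2)⟩
        map_add' := by
          intro x y
          apply Subtype.ext
          simp [Sop_add]
        map_smul' := by
          intro a x
          apply Subtype.ext
          simp [Sop_smul, Sop_add, smul_smul] }
    obtain ⟨lam, hlam⟩ := Module.End.exists_eigenvalue A
    obtain ⟨x, hx⟩ := hlam.exists_hasEigenvector
    have hx0 : (x : EuclideanSpace ℂ (Fin n)) ≠ 0 := by
      simpa [Submodule.coe_eq_zero] using hx.right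
    have hxE : Sop T (Sop T (x : EuclideanSpace ℂ (Fin n))) = lam • (x : EuclideanSpace ℂ (Fin n)) := by
      have := hx.apply_eq_smul
      exact congrArg Subtype.val this
    -- lam is a nonnegative real
    have hlamval : lam * (‖(x : EuclideanSpace ℂ (Fin n))‖ : ℂ) ^ 2
        = (‖Sop T (x : EuclideanSpace ℂ (Fin n))‖ : ℂ) ^ 2 := by
      have h1 : ⟪(x : EuclideanSpace ℂ (Fin n)), Sop T (Sop T (x : EuclideanSpace ℂ (Fin n)))⟫_ℂ
          = ⟪Sop T (x : EuclideanSpace ℂ (Fin n)), Sop T (x : EuclideanSpace ℂ (Fin n))⟫_ℂ :=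
        Sop_inner T hsymm _ _
      rw [hxE, inner_smul_right, inner_self_eq_norm_sq_to_K, inner_self_eq_norm_sq_to_K] at h1
      simpa using h1
    set c0 : ℝ := ‖Sop T (x : EuclideanSpace ℂ (Fin n))‖ ^ 2 / ‖(x : EuclideanSpace ℂ (Fin n))‖ ^ 2 with hc0def
    have hxn : ‖(x : EuclideanSpace ℂ (Fin n))‖ ≠ 0 := norm_ne_zero_iff.mpr hx0
    have hlamc : lam = (c0 : ℂ) := by
      have h2 : ((‖(x : EuclideanSpace ℂ (Fin n))‖ : ℂ)) ^ 2 ≠ 0 := by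
        simpa using hxn
      rw [hc0def]; push_cast; rw [eq_div_iff h2]
      push_cast
      linear_combination hlamval
    have hc0 : 0 ≤ c0 := by positivity
    set μ0 : ℝ := Real.sqrt c0 with hμ0def
    have hμ0 : 0 ≤ μ0 := Real.sqrt_nonneg _
    have hμ0sq : (μ0 : ℂ) ^ 2 = (c0 : ℂ) := by
      rw [← Complex.ofReal_pow]
      norm_cast
      exact Real.sq_sqrt hc0
    -- construct the conjugate-eigenvector v₀
    obtain ⟨v₀, hv₀V, hv₀n, hv₀S⟩ :
        ∃ v₀, v₀ ∈ V ∧ ‖v₀‖ = 1 ∧ Sop T v₀ = (μ0 : ℂ) • v₀ := by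
      by_cases hy : Sop T (x : EuclideanSpace ℂ (Fin n)) + (μ0 : ℂ) • (x : EuclideanSpace ℂ (Fin n)) = 0
      · -- S x = -μ0 x ; take  i • x normalized
        refine ⟨((‖(x : EuclideanSpace ℂ (Fin n))‖⁻¹ : ℝ) : ℂ) •
          (Complex.I • (x : EuclideanSpace ℂ (Fin n))), ?_, ?_, ?_⟩
        · exact Submodule.smul_mem _ _ (Submodule.smul_mem _ _ x.2)
        · rw [norm_smul, norm_smul]
          simp [hxn]
        · rw [Sop_smul, Sop_smul]
          have hSx : Sop T (x : EuclideanSpace ℂ (Fin n))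
              = -((μ0 : ℂ) • (x : EuclideanSpace ℂ (Fin n))) := by
            rw [← eq_neg_iff_add_eq_zero] at hy; exact hy
          rw [hSx]
          simp only [Complex.conj_ofReal, Complex.conj_I, smul_neg, smul_smul]
          module
      · set y := Sop T (x : EuclideanSpace ℂ (Fin n)) + (μ0 : ℂ) • (x : EuclideanSpace ℂ (Fin n)) with hydef
        have hyV : y ∈ V := Submodule.add_mem _ (hinv _ x.2) (Submodule.smul_mem _ _ x.2)
        have hSy : Sop T y = (μ0 : ℂ) • y := by
          rw [hydef, Sop_add, Sop_smul, hxE, hlamc, ← hμ0sq]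
          rw [smul_add, Complex.conj_ofReal]
          rw [smul_smul]
          module
        refine ⟨((‖y‖⁻¹ : ℝ) : ℂ) • y, Submodule.smul_mem _ _ hyV, ?_, ?_⟩
        · rw [norm_smul]
          simp [norm_ne_zero_iff.mpr hy]
        · rw [Sop_smul, hSy, Complex.conj_ofReal, smul_smul, smul_smul]
          module
    -- pass to the orthogonal complement of v₀ inside V
    have hv₀0 : v₀ ≠ 0 := by
      intro h; rw [h, norm_zero] at hv₀n; norm_num at hv₀n
    set V' : Submodule ℂ (EuclideanSpace ℂ (Fin n)) := (ℂ ∙ v₀)ᗮ ⊓ V with hV'def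
    have hV'dim : finrank ℂ V' = m := by
      apply Submodule.finrank_add_inf_finrank_orthogonal' (K₁ := ℂ ∙ v₀) (K₂ := V)
        ((Submodule.span_singleton_le_iff_mem _ _).mpr hv₀V)
      rw [finrank_span_singleton hv₀0, hdim]
      omega
    have hV'inv : ∀ z ∈ V', Sop T z ∈ V' := by
      intro z hz
      rw [hV'def, Submodule.mem_inf] at hz ⊢
      refine ⟨?_, hinv _ hz.2⟩
      rw [Submodule.mem_orthogonal_singleton_iff_inner_right]
      rw [Sop_inner T hsymm v₀ z, hv₀S, inner_smul_right]
      have : ⟪v₀, z⟫_ℂ = 0 := by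
        rw [← Submodule.mem_orthogonal_singleton_iff_inner_right]
        exact hz.1
      rw [← inner_conj_symm, this]
      simp
    obtain ⟨v, hvon, hvmem, hveig⟩ := ih V' hV'dim hV'inv
    refine ⟨Fin.cons v₀ v, ?_, ?_, ?_⟩
    · rw [orthonormal_iff_ite]
      intro i j
      refine Fin.cases ?_ ?_ i <;> [skip; intro i'] <;> refine Fin.cases ?_ ?_ j
      · simp only [Fin.cons_zero, if_pos rfl]
        rw [inner_self_eq_norm_sq_to_K, hv₀n]; norm_num
      · intro j'
        simp only [Fin.cons_zero, Fin.cons_succ]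
        rw [if_neg (Fin.succ_ne_zero j').symm]
        have := (Submodule.mem_inf.mp (hvmem j')).1
        rw [Submodule.mem_orthogonal_singleton_iff_inner_right] at this
        exact this
      · simp only [Fin.cons_zero, Fin.cons_succ]
        rw [if_neg (Fin.succ_ne_zero i')]
        have := (Submodule.mem_inf.mp (hvmem i')).1
        rw [Submodule.mem_orthogonal_singleton_iff_inner_left] at this
        exact this
      · intro j'
        simp only [Fin.cons_succ]
        rw [orthonormal_iff_ite] at hvon
        rw [hvon i' j']
        simp [Fin.succ_inj]
    · refine Fin.cases ?_ ?_
      · simpa using hv₀V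
      · intro i'
        simpa using (Submodule.mem_inf.mp (hvmem i')).2
    · refine Fin.cases ?_ ?_
      · exact ⟨μ0, hμ0, by simpa using hv₀S⟩
      · intro i'
        simpa using hveig i'

open Polynomial

/-- characteristic polynomial of an endomorphism having an eigenbasis -/
lemma charpoly_of_eigenbasis {ι : Type*} [Fintype ι] [DecidableEq ι]
    (b : Basis ι ℂ (EuclideanSpace ℂ (Fin n))) (f : Module.End ℂ (EuclideanSpace ℂ (Fin n)))
    (d : ι → ℂ) (h : ∀ i, f (b i) = d i • b i) :
    f.charpoly = ∏ i, (X - C (d i)) := by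
  have hm : LinearMap.toMatrix b b f = Matrix.diagonal d := by
    ext i j
    rw [LinearMap.toMatrix_apply, h j, map_smul]
    simp only [Basis.repr_self, Finsupp.smul_single, smul_eq_mul, mul_one, Finsupp.single_apply,
      Matrix.diagonal_apply]
    by_cases hij : i = j
    · simp [hij]
    · rw [if_neg hij, if_neg (fun h' => hij h'.symm)]
  rw [← LinearMap.charpoly_toMatrix f b, hm]
  rw [Matrix.charpoly, Matrix.charmatrix]
  have h2 : Matrix.diagonal (fun i => (X : ℂ[X]) - C (d i))
      = (Matrix.scalar ι) X - C.mapMatrix (Matrix.diagonal d) := by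
    ext i j
    by_cases hij : i = j <;>
      simp [Matrix.diagonal_apply, hij, Matrix.scalar, Matrix.one_apply]
  rw [← h2, Matrix.det_diagonal]

/-- Existence of a "Takagi" orthonormal basis realizing the singular values μ. -/
lemma exists_takagi_basis (T : Matrix (Fin n) (Fin n) ℂ) (hsymm : T.transpose = T)
    (hH : (T.conjTranspose * T).IsHermitian)
    (μ : Fin n → ℝ) (hmono : Antitone μ)
    (hsv : ∃ σ : Equiv.Perm (Fin n), ∀ i, μ i = Real.sqrt (hH.eigenvalues (σ i))) :
    ∃ w : OrthonormalBasis (Fin n) ℂ (EuclideanSpace ℂ (Fin n)),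
      (∀ i, 0 ≤ μ i) ∧ ∀ i, Sop T (w i) = (μ i : ℂ) • w i := by
  classical
  obtain ⟨v, hon, -, heig⟩ := takagi_induction T hsymm n ⊤ (by simp) (fun x _ => trivial)
  choose ν hν0 hνS using heig
  -- make an orthonormal basis from the family v
  have hsp : ⊤ ≤ Submodule.span ℂ (Set.range v) := by
    rw [hon.linearIndependent.span_eq_top_of_card_eq_finrank' (by simp)]
  let w : OrthonormalBasis (Fin n) ℂ (EuclideanSpace ℂ (Fin n)) := OrthonormalBasis.mk hon hsp
  have hw : ∀ i, w i = v i := fun i => by simp [w]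
  -- the endomorphism (Tᴴ T) ·
  let A : Module.End ℂ (EuclideanSpace ℂ (Fin n)) := Matrix.toEuclideanLin (T.conjTranspose * T)
  have hA : ∀ u, A u = Sop T (Sop T u) := by
    intro u
    apply WithLp.ofLp_injective
    rw [Sop_Sop T hsymm]
    rfl
  have hAw : ∀ i, A (w i) = ((ν i ^ 2 : ℝ) : ℂ) • w i := by
    intro i
    rw [hA, hw, hνS, Sop_smul, hνS, Complex.conj_ofReal, smul_smul]
    push_cast
    ring_nf
  have hAe : ∀ i, A (hH.eigenvectorBasis i) = ((hH.eigenvalues i : ℝ) : ℂ) • hH.eigenvectorBasis i := by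
    intro i
    have h0 := hH.mulVec_eigenvectorBasis i
    ext j
    have h2 := congrFun h0 j
    have h3 : A (hH.eigenvectorBasis i) j
        = (T.conjTranspose * T).mulVec (hH.eigenvectorBasis i) j := rfl
    rw [h3]
    refine h2.trans ?_
    show hH.eigenvalues i • (hH.eigenvectorBasis i j) = _
    rw [show ((↑(hH.eigenvalues i) : ℂ) • hH.eigenvectorBasis i) j
        = (↑(hH.eigenvalues i) : ℂ) * hH.eigenvectorBasis i j from rfl]
    rw [Complex.real_smul]
  -- charpoly comparison
  have hchar : ∏ i, (X - C ((ν i ^ 2 : ℝ) : ℂ)) = ∏ i, (X - C ((hH.eigenvalues i : ℝ) : ℂ)) := by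
    rw [← charpoly_of_eigenbasis w.toBasis A _ (fun i => by rw [OrthonormalBasis.coe_toBasis]; exact hAw i),
      ← charpoly_of_eigenbasis hH.eigenvectorBasis.toBasis A _
        (fun i => by rw [OrthonormalBasis.coe_toBasis]; exact hAe i)]
  -- deduce multiset equality over ℝ
  have hmsC : Finset.univ.val.map (fun i => ((ν i ^ 2 : ℝ) : ℂ))
      = Finset.univ.val.map (fun i => ((hH.eigenvalues i : ℝ) : ℂ)) := by
    have h1 := congrArg Polynomial.roots hchar
    rw [Finset.prod_eq_multiset_prod, Finset.prod_eq_multiset_prod,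
      show (fun i : Fin n => X - C ((ν i ^ 2 : ℝ) : ℂ))
        = ((fun a => X - C a) ∘ fun i : Fin n => ((ν i ^ 2 : ℝ) : ℂ)) from rfl,
      show (fun i : Fin n => X - C ((hH.eigenvalues i : ℝ) : ℂ))
        = ((fun a => X - C a) ∘ fun i : Fin n => ((hH.eigenvalues i : ℝ) : ℂ)) from rfl,
      ← Multiset.map_map (fun a => X - C a), ← Multiset.map_map (fun a => X - C a),
      roots_multiset_prod_X_sub_C, roots_multiset_prod_X_sub_C] at h1
    exact h1
  have hmsR : Finset.univ.val.map (fun i => (ν i ^ 2 : ℝ))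
      = Finset.univ.val.map hH.eigenvalues := by
    apply Multiset.map_injective Complex.ofReal_injective
    rwa [Multiset.map_map, Multiset.map_map]
  -- sqrt both sides : multiset ν = multiset (sqrt ∘ eigenvalues)
  have hmsS : Finset.univ.val.map ν
      = Finset.univ.val.map (Real.sqrt ∘ hH.eigenvalues) := by
    have h4 := congrArg (Multiset.map Real.sqrt) hmsR
    rw [Multiset.map_map, Multiset.map_map] at h4
    have h5 : (Real.sqrt ∘ fun i => ν i ^ 2) = ν := by
      funext i; exact Real.sqrt_sq (hν0 i)
    rwa [h5] at h4
  -- multiset μ = multiset ν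
  obtain ⟨σ, hσ⟩ := hsv
  have hmsμ : Finset.univ.val.map μ = Finset.univ.val.map ν := by
    rw [hmsS]
    have huniv : Finset.univ.val.map (⇑σ) = Finset.univ.val := by
      have := Finset.map_univ_equiv σ
      calc Finset.univ.val.map (⇑σ) = (Finset.univ.map σ.toEmbedding).val := by
            rw [Finset.map_val]; rfl
        _ = Finset.univ.val := by rw [this]
    calc Finset.univ.val.map μ
        = Finset.univ.val.map ((Real.sqrt ∘ hH.eigenvalues) ∘ ⇑σ) := by
          congr 1; funext i; exact hσ i
      _ = (Finset.univ.val.map (⇑σ)).map (Real.sqrt ∘ hH.eigenvalues) := by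
          rw [Multiset.map_map]
      _ = Finset.univ.val.map (Real.sqrt ∘ hH.eigenvalues) := by rw [huniv]
  -- find a permutation π with ν ∘ π = μ
  have hofn : ∀ (f : Fin n → ℝ), (↑(List.ofFn f) : Multiset ℝ) = Finset.univ.val.map f := by
    intro f
    rw [List.ofFn_eq_map, Fin.univ_def]
    rfl
  have hcomp : ∀ (f : Fin n → ℝ) (σ' : Equiv.Perm (Fin n)),
      List.Perm (List.ofFn (f ∘ σ')) (List.ofFn f) := by
    intro f σ'
    rw [← Multiset.coe_eq_coe, hofn, hofn, ← Multiset.map_map f (⇑σ')]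
    congr 1
    calc Finset.univ.val.map (⇑σ') = (Finset.univ.map σ'.toEmbedding).val := by
          rw [Finset.map_val]; rfl
      _ = Finset.univ.val := by rw [Finset.map_univ_equiv]
  have hperm : ∃ π : Equiv.Perm (Fin n), ν ∘ π = μ := by
    have hl : List.Perm (List.ofFn μ) (List.ofFn ν) := by
      rw [← Multiset.coe_eq_coe, hofn, hofn, hmsμ]
    have hsortν : μ ∘ Tuple.sort μ = ν ∘ Tuple.sort ν := by
      apply List.ofFn_injective
      apply (fun hp h1 h2 => List.Perm.eq_of_pairwise' (r := fun a b : ℝ => a ≤ b) h1 h2 hp)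
      · exact ((hcomp μ (Tuple.sort μ)).trans hl).trans (hcomp ν (Tuple.sort ν)).symm
      · rw [List.pairwise_ofFn]
        intro i j hij
        exact Tuple.monotone_sort μ hij.le
      · rw [List.pairwise_ofFn]
        intro i j hij
        exact Tuple.monotone_sort ν hij.le
    refine ⟨((Tuple.sort μ).symm).trans (Tuple.sort ν), ?_⟩
    funext i
    have h6 := congrFun hsortν ((Tuple.sort μ).symm i)
    simpa using h6.symm
  obtain ⟨π, hπ⟩ := hperm
  refine ⟨w.reindex π.symm, ?_, ?_⟩
  · intro i
    rw [← hπ]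
    exact hν0 _
  · intro i
    rw [OrthonormalBasis.reindex_apply]
    simp only [Equiv.symm_symm]
    rw [hw (π i), hνS (π i), show ν (π i) = μ i from congrFun hπ i]

open Finset

set_option maxHeartbeats 2000000 in
lemma core (n k : ℕ) (hk : 2 * k < n)
    (T : Matrix (Fin n) (Fin n) ℂ) (hsymm : T.transpose = T)
    (μ : Fin n → ℝ) (hmono : Antitone μ) (h0 : ∀ i, 0 ≤ μ i)
    (w : OrthonormalBasis (Fin n) ℂ (EuclideanSpace ℂ (Fin n)))
    (hS : ∀ i, Sop T (w i) = (μ i : ℂ) • w i) :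
    IsLeast {r : ℝ | ∃ V : Submodule ℂ (EuclideanSpace ℂ (Fin n)),
        Module.finrank ℂ V = n - k ∧
        IsGreatest {s : ℝ | ∃ u : EuclideanSpace ℂ (Fin n), u ∈ V ∧ ‖u‖ = 1 ∧
          s = (∑ i, ∑ j, u i * T i j * u j).re} r}
      (μ ⟨2 * k, hk⟩) := by
  classical
  set idx2k : Fin n := ⟨2 * k, hk⟩ with hidx
  set m : ℝ := μ idx2k with hm
  have hm0 : 0 ≤ m := h0 idx2k
  -- basis expansion of the inner product
  have hinner : ∀ x y : EuclideanSpace ℂ (Fin n),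
      ⟪x, y⟫_ℂ = ∑ i, conj (⟪w i, x⟫_ℂ) * ⟪w i, y⟫_ℂ := by
    intro x y
    rw [← LinearIsometryEquiv.inner_map_map w.repr x y, PiLp.inner_apply]
    simp only [OrthonormalBasis.repr_apply_apply, RCLike.inner_apply]
    exact Finset.sum_congr rfl fun i _ => mul_comm _ _
  have horth : ∀ a b : Fin n, ⟪w a, w b⟫_ℂ = if a = b then 1 else 0 :=
    orthonormal_iff_ite.mp w.orthonormal
  -- the quadratic form identity
  have hf : ∀ u : EuclideanSpace ℂ (Fin n),
      (∑ i, ∑ j, u i * T i j * u j).re = ∑ i, μ i * ((⟪w i, u⟫_ℂ) ^ 2).re := by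
    intro u
    have h1 : (∑ i, ∑ j, u i * T i j * u j) = conj (⟪u, Sop T u⟫_ℂ) := by
      rw [PiLp.inner_apply]
      simp only [RCLike.inner_apply]
      rw [map_sum]
      congr 1
      funext i
      rw [map_mul, Sop_apply]
      simp only [Complex.conj_conj]
      rw [Finset.sum_mul]
      congr 1
      funext j
      ring
    have h2 : ⟪u, Sop T u⟫_ℂ = ∑ i, (μ i : ℂ) * (conj (⟪w i, u⟫_ℂ)) ^ 2 := by
      rw [hinner u (Sop T u)]
      congr 1
      funext i
      rw [Sop_inner T hsymm (w i) u, hS i, inner_smul_right,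
        show ⟪u, w i⟫_ℂ = conj (⟪w i, u⟫_ℂ) from by rw [inner_conj_symm]]
      ring
    rw [h1, Complex.conj_re, h2]
    rw [Complex.re_sum]
    congr 1
    funext i
    rw [← map_pow]
    rw [show ((μ i : ℂ) * conj ((⟪w i, u⟫_ℂ) ^ 2)) = ((μ i : ℝ) : ℂ) * conj ((⟪w i, u⟫_ℂ) ^ 2) from rfl]
    rw [Complex.re_ofReal_mul, Complex.conj_re]
  -- Parseval
  have hnormsq : ∀ u : EuclideanSpace ℂ (Fin n),
      ∑ i, Complex.normSq (⟪w i, u⟫_ℂ) = ‖u‖ ^ 2 := by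
    intro u
    have h1 : (⟪u, u⟫_ℂ).re = ‖u‖ ^ 2 := by
      rw [inner_self_eq_norm_sq_to_K]
      norm_cast
    rw [hinner u u, Complex.re_sum] at h1
    rw [← h1]
    congr 1
    funext i
    rw [mul_comm, Complex.mul_conj]
    simp
  constructor
  · -- membership : construct the optimal subspace V
    set lo : Fin k → Fin n := fun j => ⟨(j : ℕ), by omega⟩ with hlo
    set hi : Fin k → Fin n := fun j => ⟨(j : ℕ) + k, by have := j.isLt; omega⟩ with hhi
    set c : Fin k → ℝ := fun j => Real.sqrt ((μ (hi j) - m) / (μ (lo j) + m)) with hc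
    have hhile : ∀ j : Fin k, m ≤ μ (hi j) := by
      intro j
      refine hmono ?_
      rw [hidx, hhi]
      exact Fin.mk_le_mk.mpr (by have := j.isLt; omega)
    have hlohi : ∀ j : Fin k, μ (hi j) ≤ μ (lo j) := by
      intro j
      refine hmono ?_
      rw [hlo, hhi]
      exact Fin.mk_le_mk.mpr (by omega)
    have hc0 : ∀ j, 0 ≤ c j := fun j => Real.sqrt_nonneg _
    have hcid : ∀ j : Fin k, μ (hi j) - (c j) ^ 2 * μ (lo j) = m * (1 + (c j) ^ 2) := by
      intro j
      by_cases hd : μ (lo j) + m = 0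
      · have hl0 : μ (lo j) = 0 := by have := h0 (lo j); linarith
        have hm0' : m = 0 := by have := h0 (lo j); linarith
        have hh0 : μ (hi j) = 0 := le_antisymm (hl0 ▸ hlohi j) (hm0' ▸ hhile j)
        rw [hl0, hm0', hh0]
        ring
      · have hdpos : 0 < μ (lo j) + m := lt_of_le_of_ne (by have := h0 (lo j); linarith) (Ne.symm hd)
        have hcsq : (c j) ^ 2 = (μ (hi j) - m) / (μ (lo j) + m) := by
          rw [hc]
          exact Real.sq_sqrt (div_nonneg (by have := hhile j; linarith) hdpos.le)
        rw [hcsq]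
        field_simp
        ring
    -- the subspace
    set φ : Fin k → (EuclideanSpace ℂ (Fin n) →ₗ[ℂ] ℂ) := fun j =>
      (innerSL ℂ (w (lo j)) : EuclideanSpace ℂ (Fin n) →ₗ[ℂ] ℂ)
        - (Complex.I * (c j : ℂ)) • (innerSL ℂ (w (hi j)) : EuclideanSpace ℂ (Fin n) →ₗ[ℂ] ℂ)
      with hφ
    set Φ : EuclideanSpace ℂ (Fin n) →ₗ[ℂ] (Fin k → ℂ) := LinearMap.pi φ with hΦ
    have hmemker : ∀ u : EuclideanSpace ℂ (Fin n), u ∈ LinearMap.ker Φ ↔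
        ∀ j : Fin k, ⟪w (lo j), u⟫_ℂ = (Complex.I * (c j : ℂ)) * ⟪w (hi j), u⟫_ℂ := by
      intro u
      rw [LinearMap.mem_ker, hΦ]
      rw [funext_iff]
      apply forall_congr'
      intro j
      rw [LinearMap.pi_apply, hφ]
      simp only [LinearMap.sub_apply, LinearMap.smul_apply, ContinuousLinearMap.coe_coe,
        innerSL_apply_apply, smul_eq_mul, Pi.zero_apply]
      rw [sub_eq_zero]
    have hsurj : Function.Surjective Φ := by
      intro t
      refine ⟨∑ j : Fin k, t j • w (lo j), ?_⟩
      funext j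
      rw [hΦ, LinearMap.pi_apply, hφ]
      simp only [LinearMap.sub_apply, LinearMap.smul_apply, ContinuousLinearMap.coe_coe,
        innerSL_apply_apply, smul_eq_mul]
      rw [inner_sum, inner_sum]
      simp only [inner_smul_right, horth]
      have e1 : ∑ j' : Fin k, t j' * (if lo j = lo j' then (1:ℂ) else 0) = t j := by
        rw [Finset.sum_congr rfl (g := fun j' => if j = j' then t j' else 0)]
        · rw [Finset.sum_ite_eq]
          simp
        · intro j' _
          by_cases hjj : j = j'
          · rw [if_pos hjj, if_pos (by rw [hjj]), mul_one]
          · rw [if_neg hjj, if_neg (by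
              intro hcon
              apply hjj
              rw [hlo] at hcon
              have := Fin.mk.inj_iff.mp hcon
              exact Fin.ext (by omega)), mul_zero]
      have e2 : ∑ j' : Fin k, t j' * (if hi j = lo j' then (1:ℂ) else 0) = 0 := by
        apply Finset.sum_eq_zero
        intro j' _
        rw [if_neg, mul_zero]
        intro hcon
        rw [hhi, hlo] at hcon
        have := Fin.mk.inj_iff.mp hcon
        have := j'.isLt
        omega
      rw [e1, e2, mul_zero, sub_zero]
    refine ⟨LinearMap.ker Φ, ?_, ?_, ?_⟩
    · have hr := LinearMap.finrank_range_add_finrank_ker Φ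
      rw [LinearMap.range_eq_top.mpr hsurj, finrank_top, Module.finrank_pi,
        Fintype.card_fin] at hr
      rw [finrank_euclideanSpace_fin] at hr
      omega
    · -- the maximum is attained at w idx2k
      refine ⟨w idx2k, ?_, w.orthonormal.1 idx2k, ?_⟩
      · rw [hmemker]
        intro j
        rw [horth, horth, if_neg, if_neg, mul_zero]
        · intro hcon
          rw [hhi, hidx] at hcon
          have := Fin.mk.inj_iff.mp hcon
          have := j.isLt
          omega
        · intro hcon
          rw [hlo, hidx] at hcon
          have := Fin.mk.inj_iff.mp hcon
          have := j.isLt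
          omega
      · rw [hf]
        rw [Finset.sum_eq_single idx2k]
        · rw [horth, if_pos rfl]
          simp [hm]
        · intro i _ hne
          rw [horth, if_neg hne]
          simp
        · intro h; exact absurd (Finset.mem_univ _) h
    · -- upper bound on the kernel
      rintro s ⟨u, huV, hun, hs⟩
      rw [hs, hf]
      -- move to sums over ℕ
      set D : ℕ → ℂ := fun i => if h : i < n then ⟪w ⟨i, h⟩, u⟫_ℂ else 0 with hD
      have hDlt : ∀ (i : ℕ) (h : i < n), D i = ⟪w ⟨i, h⟩, u⟫_ℂ := by
        intro i h
        rw [hD]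
        exact dif_pos h
      set M : ℕ → ℝ := fun i => if h : i < n then μ ⟨i, h⟩ else 0 with hM
      have hMlt : ∀ (i : ℕ) (h : i < n), M i = μ ⟨i, h⟩ := by
        intro i h
        rw [hM]
        exact dif_pos h
      have hsum1 : ∑ i, μ i * ((⟪w i, u⟫_ℂ) ^ 2).re
          = ∑ i ∈ range n, M i * ((D i) ^ 2).re := by
        rw [← Fin.sum_univ_eq_sum_range (fun i => M i * ((D i) ^ 2).re) n]
        apply Finset.sum_congr rfl
        intro i _
        rw [hMlt _ i.isLt, hDlt _ i.isLt, Fin.eta]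
      have hsum2 : ∑ i, Complex.normSq (⟪w i, u⟫_ℂ)
          = ∑ i ∈ range n, Complex.normSq (D i) := by
        rw [← Fin.sum_univ_eq_sum_range (fun i => Complex.normSq (D i)) n]
        apply Finset.sum_congr rfl
        intro i _
        rw [hDlt _ i.isLt, Fin.eta]
      -- the constraints satisfied by u
      have hctr : ∀ j : Fin k, D (j : ℕ) = (Complex.I * (c j : ℂ)) * D ((j : ℕ) + k) := by
        intro j
        have h1 := (hmemker u).mp huV j
        rw [hDlt _ (by have := j.isLt; omega), hDlt _ (by have := j.isLt; omega)]
        rw [show (⟨(j:ℕ), _⟩ : Fin n) = lo j from rfl, show (⟨(j:ℕ) + k, _⟩ : Fin n) = hi j from rfl]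
        exact h1
      -- splitting of sums
      have hsplit : ∀ F : ℕ → ℝ, ∑ i ∈ range n, F i
          = (∑ i ∈ range k, (F i + F (k + i))) + ∑ i ∈ Finset.Ico (2 * k) n, F i := by
        intro F
        rw [Finset.range_eq_Ico, ← Finset.sum_Ico_consecutive F (Nat.zero_le (2 * k)) (le_of_lt hk),
          ← Finset.sum_Ico_consecutive F (Nat.zero_le k) (by omega : k ≤ 2 * k),
          Finset.sum_Ico_eq_sum_range (f := F) (m := k) (n := 2 * k)]
        rw [show 2 * k - k = k from by omega, ← Finset.range_eq_Ico, ← Finset.sum_add_distrib]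
      rw [hsum1, hsplit]
      have hgoal2 : (∑ i ∈ range k,
            (m * Complex.normSq (D i) + m * Complex.normSq (D (k + i))))
          + ∑ i ∈ Finset.Ico (2 * k) n, m * Complex.normSq (D i) = m := by
        rw [← hsplit (fun i => m * Complex.normSq (D i)), ← Finset.mul_sum, ← hsum2, hnormsq, hun]
        simp
      rw [← hgoal2]
      apply add_le_add
      · apply Finset.sum_le_sum
        intro i hi'
        have hik : i < k := Finset.mem_range.mp hi'
        set j : Fin k := ⟨i, hik⟩ with hj
        have e1 : M i = μ (lo j) := by
          rw [hMlt _ (by omega)]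
        have e2 : M (k + i) = μ (hi j) := by
          rw [hMlt _ (by omega)]
          congr 1
          rw [hhi]
          exact Fin.ext (by simp [hj]; omega)
        have hz : D i = (Complex.I * (c j : ℂ)) * D (k + i) := by
          have := hctr j
          rwa [show ((j : ℕ) : ℕ) = i from rfl, Nat.add_comm i k] at this
        set z : ℂ := D (k + i) with hzdef
        have hre : (z ^ 2).re ≤ Complex.normSq z := by
          rw [sq, Complex.mul_re, Complex.normSq_apply]
          nlinarith [sq_nonneg z.im]
        have hsq : ((D i) ^ 2).re = -((c j) ^ 2) * (z ^ 2).re := by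
          rw [hz]
          have h5 : (Complex.I * (c j : ℂ) * z) ^ 2 = (((-((c j) ^ 2)) : ℝ) : ℂ) * z ^ 2 := by
            rw [mul_pow, mul_pow, Complex.I_sq]
            push_cast
            ring
          rw [h5, Complex.re_ofReal_mul]
        have hnsq : Complex.normSq (D i) = (c j) ^ 2 * Complex.normSq z := by
          rw [hz, Complex.normSq_mul, Complex.normSq_mul, Complex.normSq_I, one_mul,
            Complex.normSq_ofReal]
          ring
        calc M i * ((D i) ^ 2).re + M (k + i) * ((D (k + i)) ^ 2).re
            = (μ (hi j) - (c j) ^ 2 * μ (lo j)) * (z ^ 2).re := by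
              rw [e1, e2, hsq]
              ring
          _ = (m * (1 + (c j) ^ 2)) * (z ^ 2).re := by rw [hcid j]
          _ ≤ (m * (1 + (c j) ^ 2)) * Complex.normSq z := by
              exact mul_le_mul_of_nonneg_left hre
                (mul_nonneg hm0 (by nlinarith [sq_nonneg (c j)]))
          _ = m * Complex.normSq (D i) + m * Complex.normSq (D (k + i)) := by
              rw [hnsq]
              ring
      · apply Finset.sum_le_sum
        intro i hi'
        have hik : 2 * k ≤ i ∧ i < n := Finset.mem_Ico.mp hi'
        have hMle : M i ≤ m := by
          rw [hMlt _ hik.2]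
          refine hmono ?_
          rw [hidx]
          exact Fin.mk_le_mk.mpr hik.1
        have hM0 : 0 ≤ M i := by
          rw [hMlt _ hik.2]
          exact h0 _
        have hre : ((D i) ^ 2).re ≤ Complex.normSq (D i) := by
          rw [sq, Complex.mul_re, Complex.normSq_apply]
          nlinarith [sq_nonneg (D i).im]
        nlinarith [Complex.normSq_nonneg (D i)]
  · -- lower bound : every admissible subspace has max ≥ m
    rintro r ⟨V, hVdim, hgr⟩
    have hn2k : 2 * k + 1 ≤ n := hk
    set p : Fin (2 * k + 1) → Fin n := fun j => ⟨(j : ℕ), by have := j.isLt; omega⟩ with hp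
    set q : Fin (n - (2 * k + 1)) → Fin n :=
      fun j => ⟨2 * k + 1 + (j : ℕ), by have := j.isLt; omega⟩ with hq
    haveI : FiniteDimensional ℂ V := inferInstance
    haveI : FiniteDimensional ℝ V := FiniteDimensional.trans ℝ ℂ V
    -- the real-linear test map
    set Ψ : V →ₗ[ℝ] ((Fin (n - (2 * k + 1)) → ℂ) × (Fin (2 * k + 1) → ℝ)) :=
      LinearMap.prod
        (LinearMap.pi fun j =>
          (((innerSL ℂ (w (q j)) : EuclideanSpace ℂ (Fin n) →ₗ[ℂ] ℂ)).restrictScalars ℝ).comp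
            ((V.subtype).restrictScalars ℝ))
        (LinearMap.pi fun j =>
          Complex.imLm.comp ((((innerSL ℂ (w (p j)) :
            EuclideanSpace ℂ (Fin n) →ₗ[ℂ] ℂ)).restrictScalars ℝ).comp
              ((V.subtype).restrictScalars ℝ))) with hΨ
    have hdimV : finrank ℝ V = 2 * (n - k) := by
      have h1 := Module.finrank_mul_finrank ℝ ℂ V
      rw [Complex.finrank_real_complex, hVdim] at h1
      omega
    have hdimcod : finrank ℝ ((Fin (n - (2 * k + 1)) → ℂ) × (Fin (2 * k + 1) → ℝ))
        = (n - (2 * k + 1)) * 2 + (2 * k + 1) := by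
      rw [Module.finrank_prod, Module.finrank_pi, Module.finrank_pi_fintype]
      simp [Complex.finrank_real_complex, Finset.sum_const, mul_comm]
    -- Ψ is not injective
    have hker : ∃ x : V, x ≠ 0 ∧ Ψ x = 0 := by
      have hninj : ¬ Function.Injective Ψ := by
        intro hinj
        have hle := LinearMap.finrank_le_finrank_of_injective hinj
        rw [hdimV, hdimcod] at hle
        omega
      rw [← LinearMap.ker_eq_bot] at hninj
      obtain ⟨x, hxk, hx0⟩ := Submodule.ne_bot_iff _ |>.mp hninj
      exact ⟨x, hx0, hxk⟩
    obtain ⟨x, hx0, hxker⟩ := hker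
    have hx0E : (x : EuclideanSpace ℂ (Fin n)) ≠ 0 := by
      simpa [Submodule.coe_eq_zero] using hx0
    have hnx : ‖(x : EuclideanSpace ℂ (Fin n))‖ ≠ 0 := norm_ne_zero_iff.mpr hx0E
    -- the corresponding coordinates vanish / are real
    have hq0 : ∀ j, ⟪w (q j), (x : EuclideanSpace ℂ (Fin n))⟫_ℂ = 0 := by
      intro j
      have h1 := congrFun (congrArg Prod.fst hxker) j
      simpa [hΨ, LinearMap.prod_apply, LinearMap.pi_apply] using h1
    have hpim : ∀ j, (⟪w (p j), (x : EuclideanSpace ℂ (Fin n))⟫_ℂ).im = 0 := by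
      intro j
      have h1 := congrFun (congrArg Prod.snd hxker) j
      simpa [hΨ, LinearMap.prod_apply, LinearMap.pi_apply, Complex.imLm] using h1
    -- normalize
    set u : EuclideanSpace ℂ (Fin n) :=
      ((‖(x : EuclideanSpace ℂ (Fin n))‖⁻¹ : ℝ) : ℂ) • (x : EuclideanSpace ℂ (Fin n)) with hu
    have huV : u ∈ V := Submodule.smul_mem _ _ x.2
    have hu1 : ‖u‖ = 1 := by
      rw [hu, norm_smul]
      simp [hnx]
    have hcoord : ∀ i : Fin n, ⟪w i, u⟫_ℂ
        = ((‖(x : EuclideanSpace ℂ (Fin n))‖⁻¹ : ℝ) : ℂ)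
          * ⟪w i, (x : EuclideanSpace ℂ (Fin n))⟫_ℂ := by
      intro i
      rw [hu, inner_smul_right]
    -- termwise inequality
    have hterm : ∀ i : Fin n,
        m * Complex.normSq (⟪w i, u⟫_ℂ) ≤ μ i * ((⟪w i, u⟫_ℂ) ^ 2).re := by
      intro i
      by_cases hcase : (i : ℕ) < 2 * k + 1
      · have him : (⟪w i, u⟫_ℂ).im = 0 := by
          rw [hcoord i]
          have h2 : (⟪w i, (x : EuclideanSpace ℂ (Fin n))⟫_ℂ).im = 0 := by
            have := hpim ⟨(i : ℕ), hcase⟩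
            rwa [show p ⟨(i : ℕ), hcase⟩ = i from Fin.ext rfl] at this
          rw [Complex.mul_im, h2]
          simp [Complex.ofReal_im]
        have hrsq : ((⟪w i, u⟫_ℂ) ^ 2).re = Complex.normSq (⟪w i, u⟫_ℂ) := by
          rw [sq, Complex.mul_re, Complex.normSq_apply, him]
          ring
        rw [hrsq]
        apply mul_le_mul_of_nonneg_right _ (Complex.normSq_nonneg _)
        refine hmono ?_
        rw [hidx]
        exact Fin.mk_le_mk.mpr (by omega)
      · have hzero : ⟪w i, u⟫_ℂ = 0 := by
          rw [hcoord i]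
          have h2 : ⟪w i, (x : EuclideanSpace ℂ (Fin n))⟫_ℂ = 0 := by
            have h3 := hq0 ⟨(i : ℕ) - (2 * k + 1), by have := i.isLt; omega⟩
            rwa [show q ⟨(i : ℕ) - (2 * k + 1), _⟩ = i from Fin.ext (by
              show 2 * k + 1 + ((i : ℕ) - (2 * k + 1)) = (i : ℕ)
              omega)] at h3
          rw [h2, mul_zero]
        rw [hzero]
        simp
    -- conclude
    have hfu : m ≤ (∑ i, ∑ j, u i * T i j * u j).re := by
      rw [hf]
      calc m = m * ∑ i, Complex.normSq (⟪w i, u⟫_ℂ) := by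
            rw [hnormsq, hu1]
            simp
        _ = ∑ i, m * Complex.normSq (⟪w i, u⟫_ℂ) := by rw [Finset.mul_sum]
        _ ≤ ∑ i, μ i * ((⟪w i, u⟫_ℂ) ^ 2).re := Finset.sum_le_sum fun i _ => hterm i
    exact le_trans hfu (hgr.2 ⟨u, huV, hu1, rfl⟩)

end MinimaxAux

open scoped ComplexConjugate

/-- Min-max principle for the evenly indexed singular values of a complex symmetric
matrix: `λ_{2k} = min_{codim V = k} max_{u ∈ V, ‖u‖ = 1} Re (uᵀ T u)`. -/
theorem minimax_even_singular_values (n k : ℕ) (hk : 2 * k < n)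
    (T : Matrix (Fin n) (Fin n) ℂ) (hsymm : T.transpose = T)
    (hH : (T.conjTranspose * T).IsHermitian)
    (μ : Fin n → ℝ) (hmono : Antitone μ)
    (hsv : ∃ σ : Equiv.Perm (Fin n), ∀ i, μ i = Real.sqrt (hH.eigenvalues (σ i))) :
    IsLeast {r : ℝ | ∃ V : Submodule ℂ (EuclideanSpace ℂ (Fin n)),
        Module.finrank ℂ V = n - k ∧
        IsGreatest {s : ℝ | ∃ u : EuclideanSpace ℂ (Fin n), u ∈ V ∧ ‖u‖ = 1 ∧
          s = (∑ i, ∑ j, u i * T i j * u j).re} r}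
      (μ ⟨2 * k, hk⟩) := by
  obtain ⟨w, h0, hS⟩ := MinimaxAux.exists_takagi_basis T hsymm hH μ hmono hsv
  exact MinimaxAux.core n k hk T hsymm μ hmono h0 w hS
end

section
/- Let T be a densely defined C-selfadjoint operator with compact resolvent (T − z)⁻¹ for some z ∈ ℂ. Then ‖(T − z)⁻¹‖ = 1 / infₙ λₙ, where (λₙ) are the positive solutions of the antilinear eigenvalue problem (T − z) uₙ = λₙ C uₙ with (uₙ) an orthonormal basis of H. -/
/-!
The eigenvalue equation gives `R (C uₙ) = λₙ⁻¹ uₙ`, so `λₙ⁻¹ ≤ ‖R‖` for every `n`. Conversely,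
`C`-selfadjointness makes the bilinear form `⟪C f, (T - z) g⟫` symmetric on the domain of `T`,
which turns the eigenvalue equation into `⟪C uₙ, y⟫ = λₙ ⟪uₙ, R y⟫`. As `(C uₙ)` is again
orthonormal, Parseval for `(uₙ)` and Bessel for `(C uₙ)` give `‖R y‖ ≤ (infₙ λₙ)⁻¹ ‖y‖`.
-/

open scoped ComplexConjugate

local notation "⟪" x ", " y "⟫" => @inner ℂ _ _ x y

section InnerProductSpace

variable {ι 𝕜 E : Type*} [RCLike 𝕜] [NormedAddCommGroup E] [InnerProductSpace 𝕜 E]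

theorem HilbertBasis.hasSum_norm_inner_sq (b : HilbertBasis ι 𝕜 E) (x : E) :
    HasSum (fun i => ‖inner 𝕜 (b i) x‖ ^ 2) (‖x‖ ^ 2) := by
  simpa [b.repr_apply_apply, Real.rpow_two] using lp.hasSum_norm (p := 2) (by norm_num) (b.repr x)

theorem HilbertBasis.norm_le_of_norm_inner_le (b : HilbertBasis ι 𝕜 E) {w : ι → E}
    (hw : Orthonormal 𝕜 w) {x y : E} {c : ℝ} (hc : 0 ≤ c)
    (h : ∀ i, ‖inner 𝕜 (b i) x‖ ≤ c * ‖inner 𝕜 (w i) y‖) : ‖x‖ ≤ c * ‖y‖ := by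
  have hsq : ‖x‖ ^ 2 ≤ (c * ‖y‖) ^ 2 := by
    have hw_sum := (hw.inner_products_summable y).hasSum.mul_left (c ^ 2)
    calc ‖x‖ ^ 2 ≤ c ^ 2 * ∑' i, ‖inner 𝕜 (w i) y‖ ^ 2 :=
          hasSum_le (fun i => by rw [← mul_pow]; gcongr; exact h i)
            (b.hasSum_norm_inner_sq x) hw_sum
      _ ≤ c ^ 2 * ‖y‖ ^ 2 := by gcongr; exact hw.tsum_inner_products_le y
      _ = (c * ‖y‖) ^ 2 := (mul_pow _ _ _).symm
  exact (pow_le_pow_iff_left₀ (norm_nonneg x) (by positivity) two_ne_zero).1 hsq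

theorem Orthonormal.comp_antiunitary {v : ι → E} (hv : Orthonormal 𝕜 v) {C : E → E}
    (hC : ∀ f g, inner 𝕜 (C f) (C g) = inner 𝕜 g f) : Orthonormal 𝕜 (C ∘ v) := by
  classical
  rw [orthonormal_iff_ite] at hv ⊢
  intro i j
  rw [Function.comp_apply, Function.comp_apply, hC, hv j i]
  simp only [eq_comm]

end InnerProductSpace

theorem ContinuousLinearMap.inv_le_opNorm_of_apply_smul_eq {𝕜 E F : Type*} [RCLike 𝕜]
    [NormedAddCommGroup E] [NormedSpace 𝕜 E] [NormedAddCommGroup F] [NormedSpace 𝕜 F]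
    (R : E →L[𝕜] F) {x : E} {y : F} (hx : ‖x‖ = 1) (hy : ‖y‖ = 1) {c : ℝ} (hc : 0 < c)
    (h : R ((c : 𝕜) • x) = y) : c⁻¹ ≤ ‖R‖ := by
  have hle : 1 ≤ ‖R‖ * c := by
    calc 1 = ‖R ((c : 𝕜) • x)‖ := by rw [h, hy]
      _ ≤ ‖R‖ * ‖(c : 𝕜) • x‖ := R.le_opNorm _
      _ = ‖R‖ * c := by rw [norm_smul, hx, mul_one, RCLike.norm_of_nonneg hc.le]
  rwa [inv_le_iff_one_le_mul₀ hc]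

section ConjSelfadjoint

variable {H : Type*} [NormedAddCommGroup H] [InnerProductSpace ℂ H]
  {C : H → H} {T : H →ₗ.[ℂ] H}

theorem LinearPMap.inner_conj_apply_eq_of_conj_selfadjoint [CompleteSpace H]
    (hinv : ∀ f, C (C f) = f) (hdense : Dense (T.domain : Set H))
    (hCdom : ∀ x ∈ T.domain, C x ∈ T.adjoint.domain)
    (hCsa : ∀ (x : T.domain) (h : C (x : H) ∈ T.adjoint.domain),
      T x = C (T.adjoint ⟨C (x : H), h⟩))
    (f g : T.domain) : ⟪C f, T g⟫ = ⟪C (T f), g⟫ := by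
  have hf := hCdom f f.2
  have hCTf : C (T f) = T.adjoint ⟨C f, hf⟩ := by rw [hCsa f hf, hinv]
  rw [hCTf, T.adjoint_isFormalAdjoint hdense ⟨C f, hf⟩ g]

theorem inner_conj_eq_mul_inner_of_antilinear_eigen (hadd : ∀ f g, C (f + g) = C f + C g)
    (hsmul : ∀ (c : ℂ) (f : H), C (c • f) = conj c • C f) (hinv : ∀ f, C (C f) = f)
    (hsymm : ∀ f g : T.domain, ⟪C f, T g⟫ = ⟪C (T f), g⟫) (z : ℂ) {e : T.domain} {μ : ℝ}
    (he : T e - z • (e : H) = (μ : ℂ) • C e) (x : T.domain) :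
    ⟪C e, T x - z • (x : H)⟫ = μ * ⟪(e : H), x⟫ := by
  have hsub : ∀ f g, C (f - g) = C f - C g := (AddMonoidHom.mk' C hadd).map_sub
  calc ⟪C e, T x - z • (x : H)⟫ = ⟪C (T e), x⟫ - z * ⟪C e, (x : H)⟫ := by
        rw [inner_sub_right, inner_smul_right, hsymm]
    _ = ⟪C (T e - z • (e : H)), x⟫ := by
        rw [hsub, hsmul, inner_sub_left, inner_smul_left, Complex.conj_conj]
    _ = μ * ⟪(e : H), x⟫ := by
        rw [he, hsmul, hinv, inner_smul_left, Complex.conj_conj]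

end ConjSelfadjoint

theorem resolvent_norm_eq_inv_inf_antilinear_eigenvalues_general {H : Type*}
    [NormedAddCommGroup H] [InnerProductSpace ℂ H] [CompleteSpace H]
    (C : H → H)
    (hadd : ∀ f g, C (f + g) = C f + C g)
    (hsmul : ∀ (c : ℂ) (f : H), C (c • f) = conj c • C f)
    (hinv : ∀ f, C (C f) = f)
    (hinner : ∀ f g, ⟪C f, C g⟫ = ⟪g, f⟫)
    (T : H →ₗ.[ℂ] H)
    (hdense : Dense (T.domain : Set H))
    (hCdom : ∀ x, x ∈ T.domain ↔ C x ∈ T.adjoint.domain)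
    (hCsa : ∀ (x : T.domain) (h : C (x : H) ∈ T.adjoint.domain),
      T x = C (T.adjoint ⟨C (x : H), h⟩))
    (z : ℂ)
    (R : H →L[ℂ] H)
    (hRT : ∀ x : T.domain, R (T x - z • (x : H)) = x)
    (hTR : ∀ y : H, ∃ h : R y ∈ T.domain, T ⟨R y, h⟩ - z • R y = y)
    (u : HilbertBasis ℕ ℂ H) (lam : ℕ → ℝ)
    (hlam : ∀ m, 0 < lam m)
    (heig : ∀ m, ∃ h : u m ∈ T.domain,
      T ⟨u m, h⟩ - z • (u m) = (lam m : ℂ) • C (u m)) :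
    ‖R‖ = (⨅ m, lam m)⁻¹ := by
  have hw : Orthonormal ℂ (C ∘ u) := u.orthonormal.comp_antiunitary hinner
  have hlow : ∀ m, (lam m)⁻¹ ≤ ‖R‖ := fun m => by
    obtain ⟨hm, he⟩ := heig m
    exact R.inv_le_opNorm_of_apply_smul_eq (hw.1 m) (u.orthonormal.1 m) (hlam m)
      (he ▸ hRT ⟨u m, hm⟩)
  have hRpos : 0 < ‖R‖ := (inv_pos.2 (hlam 0)).trans_le (hlow 0)
  have hRinf : ‖R‖⁻¹ ≤ ⨅ m, lam m := le_ciInf fun m => inv_le_of_inv_le₀ (hlam m) (hlow m)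
  have hinf : 0 < ⨅ m, lam m := (inv_pos.2 hRpos).trans_le hRinf
  have hsymm := T.inner_conj_apply_eq_of_conj_selfadjoint hinv hdense
    (fun x hx => (hCdom x).1 hx) hCsa
  refine le_antisymm (R.opNorm_le_bound (inv_nonneg.2 hinf.le) fun y => ?_)
    (inv_le_of_inv_le₀ hRpos hRinf)
  obtain ⟨hx, hxy⟩ := hTR y
  refine u.norm_le_of_norm_inner_le hw (inv_nonneg.2 hinf.le) fun m => ?_
  obtain ⟨hm, he⟩ := heig m
  have hcoef : ⟪C (u m), y⟫ = lam m * ⟪u m, R y⟫ := by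
    conv_lhs => rw [← hxy]
    exact inner_conj_eq_mul_inner_of_antilinear_eigen hadd hsmul hinv hsymm z
      (e := ⟨u m, hm⟩) he ⟨R y, hx⟩
  rw [Function.comp_apply, hcoef, norm_mul, Complex.norm_real,
    Real.norm_of_nonneg (hlam m).le, ← mul_assoc]
  have hle : ⨅ m, lam m ≤ lam m := ciInf_le ⟨0, by rintro _ ⟨k, rfl⟩; exact (hlam k).le⟩ m
  exact le_mul_of_one_le_left (norm_nonneg _) ((one_le_inv_mul₀ hinf).2 hle)

/-- For a densely defined `C`-selfadjoint operator `T` with compact resolvent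
`R = (T - z)⁻¹`, the norm of the resolvent is `1 / infₙ λₙ`, where `λₙ > 0` solve the
antilinear eigenvalue problem `(T - z) uₙ = λₙ C uₙ` for an orthonormal basis `(uₙ)`. -/
theorem resolvent_norm_eq_inv_inf_antilinear_eigenvalues {H : Type*}
    [NormedAddCommGroup H] [InnerProductSpace ℂ H] [CompleteSpace H]
    (C : H → H)
    (hadd : ∀ f g, C (f + g) = C f + C g)
    (hsmul : ∀ (c : ℂ) (f : H), C (c • f) = conj c • C f)
    (hinv : ∀ f, C (C f) = f)
    (hinner : ∀ f g, ⟪C f, C g⟫ = ⟪g, f⟫)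
    (T : H →ₗ.[ℂ] H)
    (hdense : Dense (T.domain : Set H))
    (hCdom : ∀ x, x ∈ T.domain ↔ C x ∈ T.adjoint.domain)
    (hCsa : ∀ (x : T.domain) (h : C (x : H) ∈ T.adjoint.domain),
      T x = C (T.adjoint ⟨C (x : H), h⟩))
    (z : ℂ)
    (R : H →L[ℂ] H) (hRcompact : IsCompactOperator R)
    (hRT : ∀ x : T.domain, R (T x - z • (x : H)) = x)
    (hTR : ∀ y : H, ∃ h : R y ∈ T.domain, T ⟨R y, h⟩ - z • R y = y)
    (u : HilbertBasis ℕ ℂ H) (lam : ℕ → ℝ)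
    (hlam : ∀ m, 0 < lam m)
    (heig : ∀ m, ∃ h : u m ∈ T.domain,
      T ⟨u m, h⟩ - z • (u m) = (lam m : ℂ) • C (u m)) :
    ‖R‖ = (⨅ m, lam m)⁻¹ :=
  resolvent_norm_eq_inv_inf_antilinear_eigenvalues_general C hadd hsmul hinv hinner T hdense hCdom
    hCsa z R hRT hTR u lam hlam heig
end

section
/- Let |T| be a positive selfadjoint (possibly unbounded) operator with 0 in its resolvent set, J a conjugation commuting with the spectral measure of |T|, and C a conjugation. Then the operator T = C J |T| with domain D(|T|) is C-selfadjoint: T = C T* C. -/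
/-!
Antiunitary involutions `C`, `J` satisfy `⟪C (J a), y⟫ = ⟪a, J (C y)⟫`, so `T* y = g` means
`⟪|T| x, J C y⟫ = ⟪x, g⟫` for all `x ∈ D(|T|)`, i.e. `|T|* (J C y) = g`. Since `|T|` is
selfadjoint this says `J C y ∈ D(|T|)` and `|T| (J C y) = g`, and since `J` commutes with `|T|`
this is `C y ∈ D(|T|)` and `g = J |T| (C y)`, i.e. `T* y = C T C y`.
-/

open scoped ComplexConjugate

local notation "⟪" x ", " y "⟫" => @inner ℂ _ _ x y

section Antiunitary

variable {𝕜 E : Type*} [RCLike 𝕜] [NormedAddCommGroup E] [InnerProductSpace 𝕜 E]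

theorem inner_apply_left_eq_conj_inner_apply_right {J : E → E} (hJinv : Function.Involutive J)
    (hJinner : ∀ f g, inner 𝕜 (J f) (J g) = inner 𝕜 g f) (f g : E) :
    inner 𝕜 (J f) g = conj (inner 𝕜 f (J g)) := by
  rw [inner_conj_symm, ← hJinner f (J g), hJinv]

theorem inner_comp_apply_left {C J : E → E} (hCinv : Function.Involutive C)
    (hCinner : ∀ f g, inner 𝕜 (C f) (C g) = inner 𝕜 g f) (hJinv : Function.Involutive J)
    (hJinner : ∀ f g, inner 𝕜 (J f) (J g) = inner 𝕜 g f) (f g : E) :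
    inner 𝕜 (C (J f)) g = inner 𝕜 f (J (C g)) := by
  rw [inner_apply_left_eq_conj_inner_apply_right hCinv hCinner,
    inner_apply_left_eq_conj_inner_apply_right hJinv hJinner, RCLike.conj_conj]

end Antiunitary

namespace LinearPMap

open scoped LinearPMap

variable {𝕜 E F : Type*} [RCLike 𝕜] [NormedAddCommGroup E] [InnerProductSpace 𝕜 E]
  [NormedAddCommGroup F] [InnerProductSpace 𝕜 F] [CompleteSpace E]

theorem exists_adjoint_apply_eq_iff {T : E →ₗ.[𝕜] F} (hT : Dense (T.domain : Set E)) (y : F)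
    (w : E) :
    (∃ h : y ∈ T†.domain, T† ⟨y, h⟩ = w) ↔ ∀ x : T.domain, inner 𝕜 (T x) y = inner 𝕜 (x : E) w := by
  have hconj : ∀ x : T.domain, inner 𝕜 (T x) y = inner 𝕜 (x : E) w →
      inner 𝕜 w (x : E) = inner 𝕜 y (T x) := fun x hx => by
    rw [← inner_conj_symm, ← hx, inner_conj_symm]
  constructor
  · rintro ⟨hy, rfl⟩ x
    exact (adjoint_isFormalAdjoint hT).symm x ⟨y, hy⟩
  · intro hw
    have hy : y ∈ T†.domain := mem_adjoint_domain_of_exists y ⟨w, fun x => hconj x (hw x)⟩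
    exact ⟨hy, adjoint_apply_eq hT ⟨y, hy⟩ fun x => hconj x (hw x)⟩

theorem _root_.IsSelfAdjoint.exists_apply_eq_iff {A : E →ₗ.[𝕜] E} (hA : IsSelfAdjoint A)
    (y w : E) :
    (∃ h : y ∈ A.domain, A ⟨y, h⟩ = w) ↔ ∀ x : A.domain, inner 𝕜 (A x) y = inner 𝕜 (x : E) w := by
  have h := exists_adjoint_apply_eq_iff hA.dense_domain y w
  rwa [isSelfAdjoint_def.mp hA] at h

end LinearPMap

theorem LinearPMap.exists_apply_map_eq_iff {R E : Type*} [Ring R] [AddCommGroup E] [Module R E]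
    {A : E →ₗ.[R] E} {J : E → E} (hJdom : ∀ x, x ∈ A.domain ↔ J x ∈ A.domain)
    (hJA : ∀ (x : A.domain) (h : J (x : E) ∈ A.domain), J (A x) = A ⟨J (x : E), h⟩) (z w : E) :
    (∃ h : J z ∈ A.domain, A ⟨J z, h⟩ = w) ↔ ∃ h : z ∈ A.domain, w = J (A ⟨z, h⟩) := by
  constructor
  · rintro ⟨h, rfl⟩
    exact ⟨(hJdom z).mpr h, (hJA ⟨z, _⟩ h).symm⟩
  · rintro ⟨h, rfl⟩
    exact ⟨(hJdom z).mp h, (hJA ⟨z, h⟩ _).symm⟩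

theorem CJabsT_is_C_selfadjoint_general {H : Type*} [NormedAddCommGroup H]
    [InnerProductSpace ℂ H] [CompleteSpace H]
    (C J : H → H)
    (hCinv : ∀ f, C (C f) = f)
    (hCinner : ∀ f g, ⟪C f, C g⟫ = ⟪g, f⟫)
    (hJinv : ∀ f, J (J f) = f)
    (hJinner : ∀ f g, ⟪J f, J g⟫ = ⟪g, f⟫)
    (A : H →ₗ.[ℂ] H)
    (hAsa : A.adjoint = A)
    (hJdom : ∀ x, x ∈ A.domain ↔ J x ∈ A.domain)
    (hJA : ∀ (x : A.domain) (h : J (x : H) ∈ A.domain), J (A x) = A ⟨J (x : H), h⟩) :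
    ∀ y g : H,
      (∀ x : A.domain, ⟪C (J (A x)), y⟫ = ⟪(x : H), g⟫) ↔
      (∃ h : C y ∈ A.domain, g = J (A ⟨C y, h⟩)) := by
  intro y g
  have hA : IsSelfAdjoint A := hAsa
  simp only [inner_comp_apply_left hCinv hCinner hJinv hJinner]
  rw [← hA.exists_apply_eq_iff]
  exact LinearPMap.exists_apply_map_eq_iff hJdom hJA (C y) g

/-- If `|T|` is a positive selfadjoint operator with bounded inverse, `J` a conjugation
commuting with `|T|` (and with its inverse, i.e. with its spectral calculus), and `C` a
conjugation, then `T = C J |T|` (with domain `D(|T|)`) is `C`-selfadjoint: `T* = C T C`.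
The adjoint is expressed through its defining property: `T* y = g` iff
`⟪T x, y⟫ = ⟪x, g⟫` for all `x ∈ D(T)`. -/
theorem CJabsT_is_C_selfadjoint {H : Type*} [NormedAddCommGroup H]
    [InnerProductSpace ℂ H] [CompleteSpace H]
    (C J : H → H)
    (hCadd : ∀ f g, C (f + g) = C f + C g)
    (hCsmul : ∀ (c : ℂ) (f : H), C (c • f) = conj c • C f)
    (hCinv : ∀ f, C (C f) = f)
    (hCinner : ∀ f g, ⟪C f, C g⟫ = ⟪g, f⟫)
    (hJadd : ∀ f g, J (f + g) = J f + J g)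
    (hJsmul : ∀ (c : ℂ) (f : H), J (c • f) = conj c • J f)
    (hJinv : ∀ f, J (J f) = f)
    (hJinner : ∀ f g, ⟪J f, J g⟫ = ⟪g, f⟫)
    (A : H →ₗ.[ℂ] H)
    (hdense : Dense (A.domain : Set H))
    (hAsa : A.adjoint = A)
    (hApos : ∀ x : A.domain, 0 ≤ (⟪(x : H), A x⟫).re)
    (R : H →L[ℂ] H)
    (hRA : ∀ x : A.domain, R (A x) = x)
    (hAR : ∀ y : H, ∃ h : R y ∈ A.domain, A ⟨R y, h⟩ = y)
    (hJdom : ∀ x, x ∈ A.domain ↔ J x ∈ A.domain)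
    (hJA : ∀ (x : A.domain) (h : J (x : H) ∈ A.domain), J (A x) = A ⟨J (x : H), h⟩)
    (hJR : ∀ y, J (R y) = R (J y)) :
    ∀ y g : H,
      (∀ x : A.domain, ⟪C (J (A x)), y⟫ = ⟪(x : H), g⟫) ↔
      (∃ h : C y ∈ A.domain, g = J (A ⟨C y, h⟩)) :=
  CJabsT_is_C_selfadjoint_general C J hCinv hCinner hJinv hJinner A hAsa hJdom hJA
end

section
/- Let f ⊕ g solve the coupled antilinear system (A − z) f = λ ḡ and (B − z) ḡ = λ f, where B = 𝒞 A* 𝒞 (so that diag(A, B̄ᵀ-type structure) is C-selfadjoint), with λ > 0. Suppose S is a selfadjoint involution (S = S*, S² = I) and there are constants m > 0 and 0 ≤ b < 1 such that Re⟨S f, (A − z) f⟩ ≥ m(1 − b)‖f‖² and Re⟨S ḡ, (B − z) ḡ⟩ ≥ m(1 − b)‖ḡ‖². Then λ ≥ m(1 − b). -/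
/-!
Write `h = 𝒞 g` and `M = m (1 - b)`. Since `S` is a selfadjoint involution it is unitary, so by
Cauchy–Schwarz each eigenvalue equation turns its quadratic-form bound into
`M ‖f‖² ≤ λ ‖f‖ ‖h‖` and `M ‖h‖² ≤ λ ‖f‖ ‖h‖`. Adding the two and using
`2 ‖f‖ ‖h‖ ≤ ‖f‖² + ‖h‖²` gives `M (‖f‖² + ‖h‖²) ≤ λ (‖f‖² + ‖h‖²)`.
-/

open scoped ComplexConjugate

local notation "⟪" x ", " y "⟫" => @inner ℂ _ _ x y

theorem le_of_mul_sq_le_of_mul_sq_le {M r a c : ℝ} (hr : 0 ≤ r) (ha : a ≠ 0)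
    (h₁ : M * a ^ 2 ≤ r * (a * c)) (h₂ : M * c ^ 2 ≤ r * (a * c)) : M ≤ r := by
  have hpos : 0 < a ^ 2 + c ^ 2 := by positivity
  refine le_of_mul_le_mul_right ?_ hpos
  nlinarith [mul_le_mul_of_nonneg_left (two_mul_le_add_sq a c) hr]

section InnerProductSpace

variable {𝕜 E : Type*} [RCLike 𝕜] [NormedAddCommGroup E] [InnerProductSpace 𝕜 E]

theorem re_inner_ofReal_smul_le {r : ℝ} (hr : 0 ≤ r) (x y : E) :
    RCLike.re (inner 𝕜 x ((r : 𝕜) • y)) ≤ r * (‖x‖ * ‖y‖) := by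
  rw [inner_smul_right, RCLike.re_ofReal_mul]
  exact mul_le_mul_of_nonneg_left (re_inner_le_norm x y) hr

theorem ContinuousLinearMap.norm_map_of_adjoint_eq_self_of_comp_self [CompleteSpace E]
    {S : E →L[𝕜] E} (hsa : ContinuousLinearMap.adjoint S = S)
    (hinv : S ∘L S = ContinuousLinearMap.id 𝕜 E) (x : E) : ‖S x‖ = ‖x‖ :=
  S.norm_map_iff_adjoint_comp_self.mpr (by rw [hsa, hinv, ContinuousLinearMap.one_def]) x

end InnerProductSpace

theorem antilinear_eigenvalue_lower_bound_general {H : Type*} [NormedAddCommGroup H]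
    [InnerProductSpace ℂ H] [CompleteSpace H]
    (𝒞 : H → H)
    (A B : H →L[ℂ] H)
    (S : H →L[ℂ] H)
    (hSsa : ContinuousLinearMap.adjoint S = S)
    (hSinv : S ∘L S = ContinuousLinearMap.id ℂ H)
    (z : ℂ) (f g : H) (hf : f ≠ 0)
    (lam : ℝ) (hlam : 0 < lam)
    (heq1 : A f - z • f = (lam : ℂ) • 𝒞 g)
    (heq2 : B (𝒞 g) - z • 𝒞 g = (lam : ℂ) • f)
    (m b : ℝ)
    (hlow1 : m * (1 - b) * ‖f‖ ^ 2 ≤ (⟪S f, A f - z • f⟫).re)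
    (hlow2 : m * (1 - b) * ‖𝒞 g‖ ^ 2 ≤ (⟪S (𝒞 g), B (𝒞 g) - z • 𝒞 g⟫).re) :
    m * (1 - b) ≤ lam := by
  have hS := S.norm_map_of_adjoint_eq_self_of_comp_self hSsa hSinv
  have h₁ : m * (1 - b) * ‖f‖ ^ 2 ≤ lam * (‖f‖ * ‖𝒞 g‖) := by
    calc m * (1 - b) * ‖f‖ ^ 2 ≤ (⟪S f, (lam : ℂ) • 𝒞 g⟫).re := heq1 ▸ hlow1
      _ ≤ lam * (‖S f‖ * ‖𝒞 g‖) := re_inner_ofReal_smul_le (𝕜 := ℂ) hlam.le _ _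
      _ = lam * (‖f‖ * ‖𝒞 g‖) := by rw [hS]
  have h₂ : m * (1 - b) * ‖𝒞 g‖ ^ 2 ≤ lam * (‖f‖ * ‖𝒞 g‖) := by
    calc m * (1 - b) * ‖𝒞 g‖ ^ 2 ≤ (⟪S (𝒞 g), (lam : ℂ) • f⟫).re := heq2 ▸ hlow2
      _ ≤ lam * (‖S (𝒞 g)‖ * ‖f‖) := re_inner_ofReal_smul_le (𝕜 := ℂ) hlam.le _ _
      _ = lam * (‖f‖ * ‖𝒞 g‖) := by rw [hS, mul_comm ‖𝒞 g‖]
  exact le_of_mul_sq_le_of_mul_sq_le hlam.le (norm_ne_zero_iff.mpr hf) h₁ h₂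

/-- Lower bound on the antilinear eigenvalue `λ` of the coupled system
`(A - z) f = λ ḡ`, `(B - z) ḡ = λ f` (with `B = 𝒞 A* 𝒞`), given the two quadratic
form lower bounds against a selfadjoint involution `S`. -/
theorem antilinear_eigenvalue_lower_bound {H : Type*} [NormedAddCommGroup H]
    [InnerProductSpace ℂ H] [CompleteSpace H]
    (𝒞 : H → H)
    (hadd : ∀ f g, 𝒞 (f + g) = 𝒞 f + 𝒞 g)
    (hsmul : ∀ (c : ℂ) (f : H), 𝒞 (c • f) = conj c • 𝒞 f)
    (hinv : ∀ f, 𝒞 (𝒞 f) = f)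
    (hinner : ∀ f g, ⟪𝒞 f, 𝒞 g⟫ = ⟪g, f⟫)
    (A B : H →L[ℂ] H)
    (hB : ∀ f, B f = 𝒞 (ContinuousLinearMap.adjoint A (𝒞 f)))
    (S : H →L[ℂ] H)
    (hSsa : ContinuousLinearMap.adjoint S = S)
    (hSinv : S ∘L S = ContinuousLinearMap.id ℂ H)
    (z : ℂ) (f g : H) (hf : f ≠ 0) (hg : g ≠ 0)
    (lam : ℝ) (hlam : 0 < lam)
    (heq1 : A f - z • f = (lam : ℂ) • 𝒞 g)
    (heq2 : B (𝒞 g) - z • 𝒞 g = (lam : ℂ) • f)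
    (m b : ℝ) (hm : 0 < m) (hb0 : 0 ≤ b) (hb1 : b < 1)
    (hlow1 : m * (1 - b) * ‖f‖ ^ 2 ≤ (⟪S f, A f - z • f⟫).re)
    (hlow2 : m * (1 - b) * ‖𝒞 g‖ ^ 2 ≤ (⟪S (𝒞 g), B (𝒞 g) - z • 𝒞 g⟫).re) :
    m * (1 - b) ≤ lam :=
  antilinear_eigenvalue_lower_bound_general 𝒞 A B S hSsa hSinv z f g hf lam hlam heq1 heq2 m b hlow1
    hlow2
end

section
/- Define F(q, E) = √((E₊ − E − q²)(E − E₋ + q²) / (4E₋)) for E₋ < E < E₊, 0 < E₋, and 0 ≤ q with E + q² in the gap (E₋, E₊). Then the critical value q_c(E), defined as the positive solution of q = F(q, E), satisfies q_c(E) ≤ G/(4√E₋) where G = E₊ − E₋, with equality when E = (E₊ + E₋)/2 − G²/(16 E₋) (provided this value lies in the gap). -/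
/-!
Squaring the fixed-point equation gives `4 E₋ q² = A B` with `A = E₊ - E - q²` and
`B = E - E₋ + q²`. Since `A + B = G` is independent of `q`, AM-GM gives `4 E₋ q² ≤ G² / 4`.
At `E = (E₊ + E₋)/2 - k` with `k = G²/(16 E₋)` the equation factors as
`(k - q²)(k - q² - 4E₋) = 0`, and `E > E₋` forces `k < 4 E₋`, so only the root `q² = k` survives.
-/

section FixedPoint

variable {K : Type*} [Field K] [LinearOrder K] [IsStrictOrderedRing K] {Em Ep E s : K}

theorem sixteen_mul_le_sq_of_four_mul_eq (hfix : 4 * Em * s = (Ep - E - s) * (E - Em + s)) :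
    16 * Em * s ≤ (Ep - Em) ^ 2 := by
  have := four_mul_le_sq_add (Ep - E - s) (E - Em + s)
  ring_nf at this ⊢
  linarith

theorem eq_div_of_four_mul_eq_of_eq_sub (hEm : 0 < Em) (hE : Em < E) (hs : 0 ≤ s)
    (hfix : 4 * Em * s = (Ep - E - s) * (E - Em + s))
    (hEeq : E = (Ep + Em) / 2 - (Ep - Em) ^ 2 / (16 * Em)) :
    s = (Ep - Em) ^ 2 / (16 * Em) := by
  have hk16 : 16 * Em * ((Ep - Em) ^ 2 / (16 * Em)) = (Ep - Em) ^ 2 := by field_simp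
  generalize (Ep - Em) ^ 2 / (16 * Em) = k at *
  have hfactor : (k - s) * (k - s - 4 * Em) = 0 := by
    subst hEeq
    linear_combination hfix - hk16 / 4
  have hk_lt : k < 4 * Em := by
    have hk_half : k < (Ep - Em) / 2 := by linarith
    nlinarith
  rcases mul_eq_zero.1 hfactor with h | h <;> linarith

end FixedPoint

theorem Real.sq_eq_of_eq_sqrt {q x : ℝ} (hq : 0 < q) (h : q = √x) : q ^ 2 = x := by
  rw [h, Real.sq_sqrt (Real.sqrt_pos.1 (h ▸ hq)).le]

theorem critical_decay_bound_general (Em Ep E qc : ℝ)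
    (hEm : 0 < Em) (hgap : Em < Ep) (hE1 : Em < E)
    (hq : 0 < qc)
    (hqc : qc = Real.sqrt ((Ep - E - qc ^ 2) * (E - Em + qc ^ 2) / (4 * Em))) :
    qc ≤ (Ep - Em) / (4 * Real.sqrt Em) ∧
    (E = (Ep + Em) / 2 - (Ep - Em) ^ 2 / (16 * Em) →
      qc = (Ep - Em) / (4 * Real.sqrt Em)) := by
  have hfix : 4 * Em * qc ^ 2 = (Ep - E - qc ^ 2) * (E - Em + qc ^ 2) := by
    rw [mul_comm, ← eq_div_iff (by positivity)]
    exact Real.sq_eq_of_eq_sqrt hq hqc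
  have hc : 0 ≤ (Ep - Em) / (4 * Real.sqrt Em) := div_nonneg (by linarith) (by positivity)
  have hc2 : ((Ep - Em) / (4 * Real.sqrt Em)) ^ 2 = (Ep - Em) ^ 2 / (16 * Em) := by
    rw [div_pow, mul_pow, Real.sq_sqrt hEm.le]
    norm_num
  constructor
  · rw [← sq_le_sq₀ hq.le hc, hc2, le_div_iff₀ (by positivity)]
    linarith [sixteen_mul_le_sq_of_four_mul_eq hfix]
  · intro hEeq
    rw [← sq_eq_sq₀ hq.le hc, hc2]
    exact eq_div_of_four_mul_eq_of_eq_sub hEm hE1 (sq_nonneg qc) hfix hEeq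

/-- The critical exponential decay constant `q_c(E)`, defined as the positive solution of
`q = F(q, E)` with `F(q, E) = √((E₊ - E - q²)(E - E₋ + q²)/(4E₋))`, satisfies
`q_c(E) ≤ G/(4√E₋)` with `G = E₊ - E₋`, with equality when
`E = (E₊ + E₋)/2 - G²/(16E₋)`. -/
theorem critical_decay_bound (Em Ep E qc : ℝ)
    (hEm : 0 < Em) (hgap : Em < Ep) (hE1 : Em < E) (hE2 : E < Ep)
    (hq : 0 < qc)
    (hin1 : Em < E + qc ^ 2) (hin2 : E + qc ^ 2 < Ep)
    (hqc : qc = Real.sqrt ((Ep - E - qc ^ 2) * (E - Em + qc ^ 2) / (4 * Em))) :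
    qc ≤ (Ep - Em) / (4 * Real.sqrt Em) ∧
    (E = (Ep + Em) / 2 - (Ep - Em) ^ 2 / (16 * Em) →
      qc = (Ep - Em) / (4 * Real.sqrt Em)) :=
  critical_decay_bound_general Em Ep E qc hEm hgap hE1 hq hqc
end

section
/- Let T be a densely defined C-selfadjoint operator admitting the polar decomposition T = C J |T| with J a conjugation commuting strongly with |T|, and suppose λ is an eigenvalue of |T| whose eigenspace is finite-dimensional (discrete spectrum). Then there exists a nonzero ψ ∈ D(T) with T ψ = λ C ψ. -/
/-!
The eigenspace `ker (|T| - λ)` is invariant under the conjugation `J`, because `J` commutes with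
`|T|` and `λ` is real. An antilinear involution has a nonzero fixed vector in every nonzero
invariant subspace: `φ + J φ` if this is nonzero, and `i φ` otherwise (then `J φ = -φ`).
For a `J`-fixed eigenvector `ψ`, `C J |T| ψ = λ C J ψ = λ C ψ`.
-/

open scoped ComplexConjugate

local notation "⟪" x ", " y "⟫" => @inner ℂ _ _ x y

namespace LinearPMap

variable {𝕜 E : Type*} [CommRing 𝕜] [AddCommGroup E] [Module 𝕜 E]

def eigenspace (A : E →ₗ.[𝕜] E) (μ : 𝕜) : Submodule 𝕜 E where
  carrier := {x | ∃ hx : x ∈ A.domain, A ⟨x, hx⟩ = μ • x}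
  zero_mem' := ⟨A.domain.zero_mem, by rw [smul_zero]; exact A.map_zero⟩
  add_mem' := by
    rintro x y ⟨hx, hAx⟩ ⟨hy, hAy⟩
    refine ⟨A.domain.add_mem hx hy, ?_⟩
    rw [smul_add, ← hAx, ← hAy, ← A.map_add]
    rfl
  smul_mem' := by
    rintro c x ⟨hx, hAx⟩
    refine ⟨A.domain.smul_mem c hx, ?_⟩
    rw [smul_comm, ← hAx, ← A.map_smul]
    rfl

theorem semilinear_mem_eigenspace [StarRing 𝕜] {A : E →ₗ.[𝕜] E} {μ : 𝕜} (hμ : star μ = μ)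
    (J : E →ₗ⋆[𝕜] E) (hJdom : ∀ x ∈ A.domain, J x ∈ A.domain)
    (hJA : ∀ (x : A.domain) (h : J x ∈ A.domain), J (A x) = A ⟨J x, h⟩)
    {x : E} (hx : x ∈ A.eigenspace μ) : J x ∈ A.eigenspace μ := by
  obtain ⟨hxA, hAx⟩ := hx
  refine ⟨hJdom x hxA, ?_⟩
  rw [← hJA ⟨x, hxA⟩, hAx, J.map_smulₛₗ, starRingEnd_apply, hμ]

end LinearPMap

theorem exists_ne_zero_semilinear_fixed {E : Type*} [AddCommGroup E] [Module ℂ E]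
    (J : E →ₗ⋆[ℂ] E) (hJ : Function.Involutive J) {p : Submodule ℂ E}
    (hp : ∀ x ∈ p, J x ∈ p) {v : E} (hv : v ∈ p) (hv0 : v ≠ 0) :
    ∃ w ∈ p, w ≠ 0 ∧ J w = w := by
  by_cases hsum : v + J v = 0
  · have hJv : J v = -v := eq_neg_of_add_eq_zero_right hsum
    refine ⟨Complex.I • v, p.smul_mem _ hv, smul_ne_zero Complex.I_ne_zero hv0, ?_⟩
    rw [J.map_smulₛₗ, Complex.conj_I, hJv, neg_smul, smul_neg, neg_neg]
  · refine ⟨v + J v, p.add_mem hv (hp v hv), hsum, ?_⟩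
    rw [map_add, hJ v, add_comm]

theorem antilinear_eigenvector_from_eigenvalue_general {H : Type*} [NormedAddCommGroup H]
    [InnerProductSpace ℂ H]
    (C J : H → H)
    (hCsmul : ∀ (c : ℂ) (f : H), C (c • f) = conj c • C f)
    (hJadd : ∀ f g, J (f + g) = J f + J g)
    (hJsmul : ∀ (c : ℂ) (f : H), J (c • f) = conj c • J f)
    (hJinv : ∀ f, J (J f) = f)
    (A : H →ₗ.[ℂ] H)
    (hJdom : ∀ x, x ∈ A.domain ↔ J x ∈ A.domain)
    (hJA : ∀ (x : A.domain) (h : J (x : H) ∈ A.domain), J (A x) = A ⟨J (x : H), h⟩)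
    (lam : ℝ)
    (heig : ∃ φ : A.domain, (φ : H) ≠ 0 ∧ A φ = (lam : ℂ) • (φ : H)) :
    ∃ (ψ : H) (hψ : ψ ∈ A.domain), ψ ≠ 0 ∧
      C (J (A ⟨ψ, hψ⟩)) = (lam : ℂ) • C ψ := by
  let Jₗ : H →ₗ⋆[ℂ] H := { toFun := J, map_add' := hJadd, map_smul' := hJsmul }
  have hJ_eig : ∀ x ∈ A.eigenspace lam, J x ∈ A.eigenspace lam := fun _ hx =>
    LinearPMap.semilinear_mem_eigenspace (Complex.conj_ofReal lam) Jₗ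
      (fun x => (hJdom x).mp) hJA hx
  obtain ⟨φ, hφ0, hAφ⟩ := heig
  obtain ⟨ψ, ⟨hψA, hAψ⟩, hψ0, hJψ⟩ :=
    exists_ne_zero_semilinear_fixed Jₗ hJinv hJ_eig ⟨φ.2, hAφ⟩ hφ0
  refine ⟨ψ, hψA, hψ0, ?_⟩
  rw [hAψ, hJsmul, Complex.conj_ofReal, show J ψ = ψ from hJψ, hCsmul, Complex.conj_ofReal]

/-- If `T = C J |T|` is a densely defined `C`-selfadjoint operator with `J` a conjugation
commuting strongly with `|T|`, and `λ > 0` is an eigenvalue of `|T|` with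
finite-dimensional eigenspace, then there is a nonzero `ψ ∈ D(T)` with `T ψ = λ C ψ`. -/
theorem antilinear_eigenvector_from_eigenvalue {H : Type*} [NormedAddCommGroup H]
    [InnerProductSpace ℂ H] [CompleteSpace H]
    (C J : H → H)
    (hCadd : ∀ f g, C (f + g) = C f + C g)
    (hCsmul : ∀ (c : ℂ) (f : H), C (c • f) = conj c • C f)
    (hCinv : ∀ f, C (C f) = f)
    (hCinner : ∀ f g, ⟪C f, C g⟫ = ⟪g, f⟫)
    (hJadd : ∀ f g, J (f + g) = J f + J g)
    (hJsmul : ∀ (c : ℂ) (f : H), J (c • f) = conj c • J f)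
    (hJinv : ∀ f, J (J f) = f)
    (hJinner : ∀ f g, ⟪J f, J g⟫ = ⟪g, f⟫)
    (A : H →ₗ.[ℂ] H)
    (hdense : Dense (A.domain : Set H))
    (hAsa : A.adjoint = A)
    (hApos : ∀ x : A.domain, 0 ≤ (⟪(x : H), A x⟫).re)
    (hJdom : ∀ x, x ∈ A.domain ↔ J x ∈ A.domain)
    (hJA : ∀ (x : A.domain) (h : J (x : H) ∈ A.domain), J (A x) = A ⟨J (x : H), h⟩)
    (lam : ℝ) (hlam : 0 < lam)
    (hfin : FiniteDimensional ℂ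
      ↥(Submodule.span ℂ {x : H | ∃ hx : x ∈ A.domain, A ⟨x, hx⟩ = (lam : ℂ) • x}))
    (heig : ∃ φ : A.domain, (φ : H) ≠ 0 ∧ A φ = (lam : ℂ) • (φ : H)) :
    ∃ (ψ : H) (hψ : ψ ∈ A.domain), ψ ≠ 0 ∧
      C (J (A ⟨ψ, hψ⟩)) = (lam : ℂ) • C ψ :=
  antilinear_eigenvector_from_eigenvalue_general C J hCsmul hJadd hJsmul hJinv A hJdom hJA lam heig
end
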